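/- arXiv:2308.01794 — 5 statements merged into one kernel-verified Lean document; each statement's English description precedes it below -/
import Mathlib

section
/- Block-encoding of a density operator from an approximate block-encoding of a purifier: Let n, a, b be natural numbers, β ≥ 1, ε ≥ 0. Let ρ be a density matrix on ℂ^{2^n}, and let V be a unitary on ℂ^{2^a} ⊗ ℂ^{2^n} such that the partial trace over the first factor ℂ^{2^a} of (V|0⟩)(V|0⟩)† equals ρ, where |0⟩ denotes the all-zeros basis vector of ℂ^{2^a} ⊗ ℂ^{2^n} (i.e., V|0⟩ is a purification of ρ). Let U be a unitary on ℂ^{2^b} ⊗ ℂ^{2^a} ⊗ ℂ^{2^n} that is a (β, b, ε)-block-encoding of V. On the Hilbert space H = ℂ^{2^b}_{(1)} ⊗ ℂ^{2^b}_{(2)} ⊗ ℂ^{2^a} ⊗ ℂ^{2^n}_{(s)} ⊗ ℂ^{2^n}_{(t)}, define the unitary Ũ as the composition of: first U applied to registers ((1), a, s); then the SWAP of registers (s) and (t); then U† applied to registers ((2), a, s); identity on all other registers in each step. Then the operator β²·(⟨0|_{(1),(2),a,s} ⊗ I_{(t)}) Ũ (|0⟩_{(1),(2),a,s} ⊗ I_{(t)})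 on ℂ^{2^n}_{(t)} satisfies ‖β²·(⟨0| ⊗ I) Ũ (|0⟩ ⊗ I) − ρ‖ ≤ 2ε + ε²; in particular, when β = 1, ε = 0, b = 0 and U = V, this block equals ρ exactly. -/
/-!
Let `x = β (⟨0|_b ⊗ I) U |0⟩` and `y = V |0⟩`, vectors on `a ⊗ s`, and for such a vector `v` let
`W_v` be `v` reshaped into an `s × a` matrix, so that `W_v W_vᴴ = tr_a |v⟩⟨v|`. Sandwiching the
SWAP between `U` and `U†` acting on different ancillas makes the corner `β² ⟨0| Ũ |0⟩` equal to
`W_x W_xᴴ`, while `ρ = W_y W_yᴴ`. Since `‖W_v‖ ≤ |v|`, the block-encoding bound gives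
`‖W_x - W_y‖ ≤ |x - y| ≤ ε` and unitarity of `V` gives `‖W_y‖ ≤ 1`; then
`W_x W_xᴴ - W_y W_yᴴ = W_x (W_x - W_y)ᴴ + (W_x - W_y) W_yᴴ` has norm at most `(1 + ε) ε + ε`.
-/

open scoped ComplexOrder Matrix

instance (a : ℕ) : NeZero (2 ^ a) := ⟨pow_ne_zero a two_ne_zero⟩

/-- The ℓ² operator norm (largest singular value) of a complex matrix. -/
noncomputable def l2OpNorm {m n : Type*} [Fintype m] [Fintype n] [DecidableEq n]
    (M : Matrix m n ℂ) : ℝ :=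
  ‖(Matrix.toEuclideanLin M).toContinuousLinearMap‖

open scoped Matrix.Norms.L2Operator

namespace Matrix
variable {m n : Type*} [Fintype m] [Fintype n] [DecidableEq n]

lemma l2_opNorm_sq_le_sum_sq (A : Matrix m n ℂ) : ‖A‖ ^ 2 ≤ ∑ i, ∑ j, ‖A i j‖ ^ 2 := by
  rw [← Real.sqrt_le_sqrt_iff (by positivity), Real.sqrt_sq (norm_nonneg _), l2_opNorm_def]
  refine ContinuousLinearMap.opNorm_le_bound _ (Real.sqrt_nonneg _) fun x ↦ ?_
  have hrow : ∀ i, ‖∑ j, A i j * x j‖ ^ 2 ≤ (∑ j, ‖A i j‖ ^ 2) * ∑ j, ‖x j‖ ^ 2 := fun i ↦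
    calc ‖∑ j, A i j * x j‖ ^ 2 ≤ (∑ j, ‖A i j‖ * ‖x j‖) ^ 2 := by
          gcongr; exact (norm_sum_le _ _).trans_eq (by simp only [norm_mul])
      _ ≤ _ := Finset.sum_mul_sq_le_sq_mul_sq _ _ _
  rw [EuclideanSpace.norm_eq x, ← Real.sqrt_mul (by positivity), EuclideanSpace.norm_eq,
    Finset.sum_mul]
  gcongr with i
  simpa [toLpLin_apply, mulVec, dotProduct] using hrow i

lemma sum_sq_le_l2_opNorm_sq (A : Matrix m n ℂ) (q : n) : ∑ p, ‖A p q‖ ^ 2 ≤ ‖A‖ ^ 2 := by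
  have h := A.l2_opNorm_mulVec (EuclideanSpace.single q 1)
  rw [PiLp.norm_single, norm_one, mul_one, EuclideanSpace.norm_eq] at h
  simpa [mulVec, dotProduct, Pi.single_apply] using (Real.sqrt_le_left (by positivity)).mp h

end Matrix

section Registers
variable {R B A N : Type*} [DecidableEq B] [DecidableEq A] [DecidableEq N]

-- An index `(p₁, p₂, pₐ, pₛ, pₜ) : B × B × A × N × N` lists the registers `(1), (2), a, s, t`.
def applyOnFirst [Zero R] (M : Matrix (B × A × N) (B × A × N) R) :
    Matrix (B × B × A × N × N) (B × B × A × N × N) R :=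
  Matrix.of fun p q ↦ if p.2.1 = q.2.1 ∧ p.2.2.2.2 = q.2.2.2.2 then
    M (p.1, p.2.2.1, p.2.2.2.1) (q.1, q.2.2.1, q.2.2.2.1) else 0

def applyOnSecond [Zero R] (M : Matrix (B × A × N) (B × A × N) R) :
    Matrix (B × B × A × N × N) (B × B × A × N × N) R :=
  Matrix.of fun p q ↦ if p.1 = q.1 ∧ p.2.2.2.2 = q.2.2.2.2 then
    M (p.2.1, p.2.2.1, p.2.2.2.1) (q.2.1, q.2.2.1, q.2.2.2.1) else 0

def swapLast [Zero R] [One R] : Matrix (B × B × A × N × N) (B × B × A × N × N) R :=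
  Matrix.of fun p q ↦ if p.1 = q.1 ∧ p.2.1 = q.2.1 ∧ p.2.2.1 = q.2.2.1 ∧
    p.2.2.2.1 = q.2.2.2.2 ∧ p.2.2.2.2 = q.2.2.2.1 then 1 else 0

variable [Fintype B] [Fintype A] [Fintype N]

lemma applyOnSecond_mul_swapLast_mul_applyOnFirst_apply [Semiring R]
    (M₁ M₂ : Matrix (B × A × N) (B × A × N) R) (p q : B × B × A × N × N) :
    (applyOnSecond M₂ * (swapLast : Matrix (B × B × A × N × N) _ R) * applyOnFirst M₁) p q =
      ∑ k, M₂ (p.2.1, p.2.2.1, p.2.2.2.1) (q.2.1, k, q.2.2.2.2) *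
        M₁ (p.1, k, p.2.2.2.2) (q.1, q.2.2.1, q.2.2.2.1) := by
  obtain ⟨p₁, p₂, pa, ps, pt⟩ := p
  obtain ⟨q₁, q₂, qa, qs, qt⟩ := q
  simp [applyOnFirst, applyOnSecond, swapLast, Matrix.mul_apply, Fintype.sum_prod_type, ite_and,
    ite_mul, mul_ite, Finset.sum_ite_eq, Finset.sum_ite_eq']

end Registers

namespace Matrix
variable {R A N m : Type*}

-- The column `q` of `M` as a vector `v` on `A ⊗ N`, reshaped so that `W * Wᴴ = tr_A |v⟩⟨v|`.
def colReshape (M : Matrix (A × N) m R) (q : m) : Matrix N A R :=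
  of fun i k ↦ M (k, i) q

lemma colReshape_sub [Sub R] (M M' : Matrix (A × N) m R) (q : m) :
    colReshape (M - M') q = colReshape M q - colReshape M' q := rfl

lemma colReshape_mul_conjTranspose_apply [Fintype A] [Mul R] [AddCommMonoid R] [Star R]
    (M : Matrix (A × N) m R) (q : m) (i j : N) :
    (colReshape M q * (colReshape M q)ᴴ) i j = ∑ k, M (k, i) q * star (M (k, j) q) := rfl

lemma l2_opNorm_colReshape_le [Fintype A] [Fintype N] [Fintype m] [DecidableEq A] [DecidableEq m]
    (M : Matrix (A × N) m ℂ) (q : m) : ‖colReshape M q‖ ≤ ‖M‖ := by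
  refine le_of_pow_le_pow_left₀ two_ne_zero (norm_nonneg _) ?_
  calc ‖colReshape M q‖ ^ 2 ≤ ∑ i, ∑ k, ‖M (k, i) q‖ ^ 2 := l2_opNorm_sq_le_sum_sq _
    _ = ∑ p, ‖M p q‖ ^ 2 := by rw [Finset.sum_comm, ← Fintype.sum_prod_type']
    _ ≤ ‖M‖ ^ 2 := sum_sq_le_l2_opNorm_sq M q

lemma l2_opNorm_mul_conjTranspose_sub_le [Fintype A] [Fintype N] [DecidableEq A] [DecidableEq N]
    {X Y : Matrix N A ℂ} {ε : ℝ} (hY : ‖Y‖ ≤ 1) (hXY : ‖X - Y‖ ≤ ε) :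
    ‖X * Xᴴ - Y * Yᴴ‖ ≤ 2 * ε + ε ^ 2 := by
  have hε : 0 ≤ ε := (norm_nonneg _).trans hXY
  have hX : ‖X‖ ≤ 1 + ε :=
    calc ‖X‖ = ‖Y + (X - Y)‖ := by rw [add_sub_cancel]
      _ ≤ 1 + ε := (norm_add_le _ _).trans (add_le_add hY hXY)
  have hmul (P Q : Matrix N A ℂ) : ‖P * Qᴴ‖ ≤ ‖P‖ * ‖Q‖ :=
    (l2_opNorm_mul _ _).trans_eq (by rw [l2_opNorm_conjTranspose])
  calc ‖X * Xᴴ - Y * Yᴴ‖ = ‖X * (X - Y)ᴴ + (X - Y) * Yᴴ‖ := by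
        rw [conjTranspose_sub, Matrix.mul_sub, Matrix.sub_mul]; abel_nf
    _ ≤ ‖X‖ * ‖X - Y‖ + ‖X - Y‖ * ‖Y‖ :=
        (norm_add_le _ _).trans (add_le_add (hmul _ _) (hmul _ _))
    _ ≤ (1 + ε) * ε + ε * 1 := by gcongr
    _ = 2 * ε + ε ^ 2 := by ring

end Matrix

theorem block_encoding_of_density_operator_general
    (n a b : ℕ) (β ε : ℝ)
    (ρ : Matrix (Fin (2 ^ n)) (Fin (2 ^ n)) ℂ)
    (V : Matrix (Fin (2 ^ a) × Fin (2 ^ n)) (Fin (2 ^ a) × Fin (2 ^ n)) ℂ)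
    (hV : V ∈ Matrix.unitaryGroup (Fin (2 ^ a) × Fin (2 ^ n)) ℂ)
    (hpure : ∀ i j : Fin (2 ^ n),
      (∑ k : Fin (2 ^ a), V (k, i) (0, 0) * star (V (k, j) (0, 0))) = ρ i j)
    (U : Matrix (Fin (2 ^ b) × Fin (2 ^ a) × Fin (2 ^ n))
                (Fin (2 ^ b) × Fin (2 ^ a) × Fin (2 ^ n)) ℂ)
    (hUBE : l2OpNorm ((β : ℂ) • Matrix.of (fun p q : Fin (2 ^ a) × Fin (2 ^ n) =>
      U (0, p) (0, q)) - V) ≤ ε)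
    -- `U₁`: `U` applied to registers `((1), a, s)`, identity on `(2)` and `t`
    (U₁ : Matrix (Fin (2 ^ b) × Fin (2 ^ b) × Fin (2 ^ a) × Fin (2 ^ n) × Fin (2 ^ n))
                 (Fin (2 ^ b) × Fin (2 ^ b) × Fin (2 ^ a) × Fin (2 ^ n) × Fin (2 ^ n)) ℂ)
    (hU₁ : U₁ = Matrix.of (fun p q =>
      if p.2.1 = q.2.1 ∧ p.2.2.2.2 = q.2.2.2.2 then
        U (p.1, p.2.2.1, p.2.2.2.1) (q.1, q.2.2.1, q.2.2.2.1) else 0))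
    -- `S`: the SWAP of registers `s` and `t`
    (S : Matrix (Fin (2 ^ b) × Fin (2 ^ b) × Fin (2 ^ a) × Fin (2 ^ n) × Fin (2 ^ n))
                (Fin (2 ^ b) × Fin (2 ^ b) × Fin (2 ^ a) × Fin (2 ^ n) × Fin (2 ^ n)) ℂ)
    (hS : S = Matrix.of (fun p q =>
      if p.1 = q.1 ∧ p.2.1 = q.2.1 ∧ p.2.2.1 = q.2.2.1 ∧
          p.2.2.2.1 = q.2.2.2.2 ∧ p.2.2.2.2 = q.2.2.2.1 then 1 else 0))
    -- `U₂`: `U†` applied to registers `((2), a, s)`, identity on `(1)` and `t`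
    (U₂ : Matrix (Fin (2 ^ b) × Fin (2 ^ b) × Fin (2 ^ a) × Fin (2 ^ n) × Fin (2 ^ n))
                 (Fin (2 ^ b) × Fin (2 ^ b) × Fin (2 ^ a) × Fin (2 ^ n) × Fin (2 ^ n)) ℂ)
    (hU₂ : U₂ = Matrix.of (fun p q =>
      if p.1 = q.1 ∧ p.2.2.2.2 = q.2.2.2.2 then
        Uᴴ (p.2.1, p.2.2.1, p.2.2.2.1) (q.2.1, q.2.2.1, q.2.2.2.1) else 0))
    (Ut : Matrix (Fin (2 ^ b) × Fin (2 ^ b) × Fin (2 ^ a) × Fin (2 ^ n) × Fin (2 ^ n))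
                (Fin (2 ^ b) × Fin (2 ^ b) × Fin (2 ^ a) × Fin (2 ^ n) × Fin (2 ^ n)) ℂ)
    (hUt : Ut = U₂ * S * U₁) :
    l2OpNorm (((β : ℂ) ^ 2) • Matrix.of (fun i j : Fin (2 ^ n) =>
        Ut (0, 0, 0, 0, i) (0, 0, 0, 0, j)) - ρ) ≤ 2 * ε + ε ^ 2 := by
  replace hUt : Ut = applyOnSecond Uᴴ * swapLast * applyOnFirst U := by
    rw [hUt, hU₁, hS, hU₂]; rfl
  set X := Matrix.colReshape
    ((β : ℂ) • Matrix.of fun p q : Fin (2 ^ a) × Fin (2 ^ n) ↦ U (0, p) (0, q)) (0, 0)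
  set Y := Matrix.colReshape V (0, 0)
  have hρ : ρ = Y * Yᴴ := by
    ext i j; rw [Matrix.colReshape_mul_conjTranspose_apply, hpure]
  have hblock :
      ((β : ℂ) ^ 2) • Matrix.of (fun i j ↦ Ut (0, 0, 0, 0, i) (0, 0, 0, 0, j)) = X * Xᴴ := by
    ext i j
    rw [Matrix.colReshape_mul_conjTranspose_apply, Matrix.smul_apply, Matrix.of_apply, hUt,
      applyOnSecond_mul_swapLast_mul_applyOnFirst_apply, smul_eq_mul, Finset.mul_sum]
    refine Finset.sum_congr rfl fun k _ ↦ ?_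
    simp only [Matrix.conjTranspose_apply, Matrix.of_apply, Matrix.smul_apply, smul_eq_mul,
      star_mul', Complex.star_def, Complex.conj_ofReal]
    ring
  have hY : ‖Y‖ ≤ 1 :=
    (Matrix.l2_opNorm_colReshape_le V _).trans (CStarRing.norm_of_mem_unitary hV).le
  have hXY : ‖X - Y‖ ≤ ε := by
    rw [← Matrix.colReshape_sub]; exact (Matrix.l2_opNorm_colReshape_le _ _).trans hUBE
  show ‖_‖ ≤ _
  rw [hblock, hρ]
  exact Matrix.l2_opNorm_mul_conjTranspose_sub_le hY hXY

/-- **Block-encoding of a density operator from an approximate block-encoding of a purifier.**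
Registers: `(1) : ℂ^{2^b}`, `(2) : ℂ^{2^b}`, `a : ℂ^{2^a}`, `s, t : ℂ^{2^n}`.
`V` is a unitary on registers `(a, s)` whose first column `V|0⟩` purifies `ρ` (partial trace over
the `a` register), `U` is a unitary on `((1) or (2), a, s)` that is a `(β, b, ε)`-block-encoding
of `V`, and `Ut = U₂† ∘ SWAP_{s,t} ∘ U₁` where `U₁` applies `U` to `((1), a, s)` and `U₂` applies
`U` to `((2), a, s)`.  Then `‖β² ⬝ (⟨0| ⊗ I) Ut (|0⟩ ⊗ I) − ρ‖ ≤ 2ε + ε²`. -/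
theorem block_encoding_of_density_operator
    (n a b : ℕ) (β ε : ℝ) (hβ : 1 ≤ β) (hε : 0 ≤ ε)
    (ρ : Matrix (Fin (2 ^ n)) (Fin (2 ^ n)) ℂ)
    (hρ : ρ.PosSemidef) (hρtr : ρ.trace = 1)
    (V : Matrix (Fin (2 ^ a) × Fin (2 ^ n)) (Fin (2 ^ a) × Fin (2 ^ n)) ℂ)
    (hV : V ∈ Matrix.unitaryGroup (Fin (2 ^ a) × Fin (2 ^ n)) ℂ)
    (hpure : ∀ i j : Fin (2 ^ n),
      (∑ k : Fin (2 ^ a), V (k, i) (0, 0) * star (V (k, j) (0, 0))) = ρ i j)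
    (U : Matrix (Fin (2 ^ b) × Fin (2 ^ a) × Fin (2 ^ n))
                (Fin (2 ^ b) × Fin (2 ^ a) × Fin (2 ^ n)) ℂ)
    (hU : U ∈ Matrix.unitaryGroup (Fin (2 ^ b) × Fin (2 ^ a) × Fin (2 ^ n)) ℂ)
    (hUBE : l2OpNorm ((β : ℂ) • Matrix.of (fun p q : Fin (2 ^ a) × Fin (2 ^ n) =>
      U (0, p) (0, q)) - V) ≤ ε)
    -- `U₁`: `U` applied to registers `((1), a, s)`, identity on `(2)` and `t`
    (U₁ : Matrix (Fin (2 ^ b) × Fin (2 ^ b) × Fin (2 ^ a) × Fin (2 ^ n) × Fin (2 ^ n))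
                 (Fin (2 ^ b) × Fin (2 ^ b) × Fin (2 ^ a) × Fin (2 ^ n) × Fin (2 ^ n)) ℂ)
    (hU₁ : U₁ = Matrix.of (fun p q =>
      if p.2.1 = q.2.1 ∧ p.2.2.2.2 = q.2.2.2.2 then
        U (p.1, p.2.2.1, p.2.2.2.1) (q.1, q.2.2.1, q.2.2.2.1) else 0))
    -- `S`: the SWAP of registers `s` and `t`
    (S : Matrix (Fin (2 ^ b) × Fin (2 ^ b) × Fin (2 ^ a) × Fin (2 ^ n) × Fin (2 ^ n))
                (Fin (2 ^ b) × Fin (2 ^ b) × Fin (2 ^ a) × Fin (2 ^ n) × Fin (2 ^ n)) ℂ)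
    (hS : S = Matrix.of (fun p q =>
      if p.1 = q.1 ∧ p.2.1 = q.2.1 ∧ p.2.2.1 = q.2.2.1 ∧
          p.2.2.2.1 = q.2.2.2.2 ∧ p.2.2.2.2 = q.2.2.2.1 then 1 else 0))
    -- `U₂`: `U†` applied to registers `((2), a, s)`, identity on `(1)` and `t`
    (U₂ : Matrix (Fin (2 ^ b) × Fin (2 ^ b) × Fin (2 ^ a) × Fin (2 ^ n) × Fin (2 ^ n))
                 (Fin (2 ^ b) × Fin (2 ^ b) × Fin (2 ^ a) × Fin (2 ^ n) × Fin (2 ^ n)) ℂ)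
    (hU₂ : U₂ = Matrix.of (fun p q =>
      if p.1 = q.1 ∧ p.2.2.2.2 = q.2.2.2.2 then
        Uᴴ (p.2.1, p.2.2.1, p.2.2.2.1) (q.2.1, q.2.2.1, q.2.2.2.1) else 0))
    (Ut : Matrix (Fin (2 ^ b) × Fin (2 ^ b) × Fin (2 ^ a) × Fin (2 ^ n) × Fin (2 ^ n))
                (Fin (2 ^ b) × Fin (2 ^ b) × Fin (2 ^ a) × Fin (2 ^ n) × Fin (2 ^ n)) ℂ)
    (hUt : Ut = U₂ * S * U₁) :
    l2OpNorm (((β : ℂ) ^ 2) • Matrix.of (fun i j : Fin (2 ^ n) =>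
        Ut (0, 0, 0, 0, i) (0, 0, 0, 0, j)) - ρ) ≤ 2 * ε + ε ^ 2 :=
  block_encoding_of_density_operator_general n a b β ε ρ V hV hpure U hUBE U₁ hU₁ S hS U₂ hU₂ Ut hUt
end

section
/- Block-encoding of quantum query algorithms: Let Q, n, a be natural numbers and ε ≥ 0. Let G₀, G₁, …, G_Q and U₁, …, U_Q be unitary matrices on ℂ^{2^n}, and for each j ∈ {1, …, Q} let V_j be a unitary matrix on ℂ^{2^a} ⊗ ℂ^{2^n} that is a (1, a, ε)-block-encoding of U_j. On the Hilbert space H = (ℂ^{2^a})^{⊗Q} ⊗ ℂ^{2^n}, let Ṽ_j denote V_j applied to the j-th ancilla factor together with the system factor ℂ^{2^n} (identity on all other ancilla factors), and let G̃_j = I ⊗ G_j. Then the unitary W = G̃_Q Ṽ_Q ⋯ G̃_2 Ṽ_2 G̃_1 Ṽ_1 G̃_0 is a (1, Qa, Qε)-block-encoding of G_Q U_Q ⋯ G_2 U_2 G_1 U_1 G_0, i.e., ‖(⟨0|^{⊗Qa} ⊗ I) W (|0⟩^{⊗Qa} ⊗ I) − G_Q U_Q ⋯ G_1 U_1 G_0‖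 ≤ Qε. -/
open Matrix
open scoped Matrix.Norms.L2Operator

namespace BEaux

lemma l2OpNorm_eq_norm {m n : Type*} [Fintype m] [Fintype n] [DecidableEq n]
    (M : Matrix m n ℂ) : l2OpNorm M = ‖M‖ := rfl

variable {m n k l : Type*} [Fintype m] [Fintype n] [Fintype k] [Fintype l]
  [DecidableEq m] [DecidableEq n] [DecidableEq k] [DecidableEq l]

/-- Embedding matrix of an injection. -/
def emb (f : k → m) : Matrix m k ℂ := Matrix.of fun r p => if r = f p then 1 else 0

lemma emb_conjT_mul (f : k → m) (hf : Function.Injective f) :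
    (emb f)ᴴ * emb f = 1 := by
  ext p q
  simp only [Matrix.mul_apply, Matrix.conjTranspose_apply, emb, Matrix.of_apply,
    apply_ite (star : ℂ → ℂ), star_one, star_zero, ite_mul, one_mul, zero_mul, mul_ite,
    mul_one, mul_zero, Finset.sum_ite_eq, Finset.sum_ite_eq', Finset.mem_univ, if_true,
    Matrix.one_apply, hf.eq_iff, eq_comm]

lemma norm_one_le : ‖(1 : Matrix k k ℂ)‖ ≤ 1 := by
  rcases isEmpty_or_nonempty k with h | h
  · have : (1 : Matrix k k ℂ) = 0 := Subsingleton.elim _ _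
    simp [this]
  · haveI : Nontrivial (Matrix k k ℂ) := inferInstanceAs (Nontrivial (k → k → ℂ))
    exact le_of_eq CStarRing.norm_one

lemma norm_emb_le (f : k → m) (hf : Function.Injective f) : ‖emb f‖ ≤ 1 := by
  have h1 : ‖(emb f)ᴴ * emb f‖ = ‖emb f‖ * ‖emb f‖ :=
    Matrix.l2_opNorm_conjTranspose_mul_self _
  rw [emb_conjT_mul f hf] at h1
  nlinarith [norm_nonneg (emb f), norm_one_le (k := k)]

lemma submatrix_eq (M : Matrix m n ℂ) (f : k → m) (g : l → n) :
    M.submatrix f g = (emb f)ᴴ * M * emb g := by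
  ext p q
  simp only [Matrix.mul_apply, Matrix.conjTranspose_apply, emb, Matrix.of_apply,
    Matrix.submatrix_apply, apply_ite (star : ℂ → ℂ), star_one, star_zero, ite_mul, one_mul,
    zero_mul, mul_ite, mul_one, mul_zero, Finset.sum_ite_eq, Finset.sum_ite_eq',
    Finset.mem_univ, if_true]

lemma norm_submatrix_le (M : Matrix m n ℂ) (f : k → m) (g : l → n)
    (hf : Function.Injective f) (hg : Function.Injective g) :
    ‖M.submatrix f g‖ ≤ ‖M‖ := by
  rw [submatrix_eq]
  calc ‖(emb f)ᴴ * M * emb g‖ ≤ ‖(emb f)ᴴ * M‖ * ‖emb g‖ := Matrix.l2_opNorm_mul _ _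
    _ ≤ ‖(emb f)ᴴ‖ * ‖M‖ * ‖emb g‖ := by
        have := Matrix.l2_opNorm_mul (emb f)ᴴ M
        nlinarith [norm_nonneg (emb g)]
    _ ≤ ‖M‖ := by
        have h1 : ‖(emb f)ᴴ‖ = ‖emb f‖ := Matrix.l2_opNorm_conjTranspose _
        have h2 := norm_emb_le f hf
        have h3 := norm_emb_le g hg
        rw [h1]
        calc ‖emb f‖ * ‖M‖ * ‖emb g‖ ≤ 1 * ‖M‖ * 1 := by
              apply mul_le_mul _ h3 (norm_nonneg _) (by positivity)
              exact mul_le_mul h2 le_rfl (norm_nonneg M) zero_le_one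
          _ = ‖M‖ := by ring

end BEaux

namespace BEaux

variable {ι A N : Type*} [Fintype ι] [DecidableEq ι] [Fintype A] [DecidableEq A]
  [Fintype N] [DecidableEq N]

/-- Apply a two-register matrix to the `j`-th ancilla register and the system. -/
def lift (j : ι) (F : Matrix (A × N) (A × N) ℂ) : Matrix ((ι → A) × N) ((ι → A) × N) ℂ :=
  Matrix.of fun p q =>
    if ∀ k, k ≠ j → p.1 k = q.1 k then F (p.1 j, p.2) (q.1 j, q.2) else 0

lemma sum_update (x : ι → A) (j : ι) (h : (ι → A) → ℂ) :
    ∑ z : ι → A, (if ∀ k, k ≠ j → x k = z k then h z else 0)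
      = ∑ v : A, h (Function.update x j v) := by
  have key : ∀ z : ι → A, (if ∀ k, k ≠ j → x k = z k then h z else 0)
      = ∑ v : A, if z = Function.update x j v then h z else 0 := by
    intro z
    by_cases hc : ∀ k, k ≠ j → x k = z k
    · rw [if_pos hc, Finset.sum_eq_single (z j)]
      · rw [if_pos]
        funext k
        by_cases hk : k = j
        · subst hk; simp
        · rw [Function.update_of_ne hk, hc k hk]
      · intro v _ hv
        rw [if_neg]
        intro hz
        apply hv
        rw [hz, Function.update_self]
      · simp
    · rw [if_neg hc]
      symm
      apply Finset.sum_eq_zero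
      intro v _
      rw [if_neg]
      intro hz
      apply hc
      intro k hk
      rw [hz, Function.update_of_ne hk]
  rw [Finset.sum_congr rfl fun z _ => key z, Finset.sum_comm]
  refine Finset.sum_congr rfl fun v _ => ?_
  rw [Finset.sum_ite_eq' Finset.univ (Function.update x j v) h]
  simp

lemma prod_lift_apply (l : List ι) (hl : l.Nodup) (F : ι → Matrix (A × N) (A × N) ℂ)
    (y : ι → A) (j : N) :
    ∀ (x : ι → A) (i : N),
    ((l.map fun k => lift k (F k)).prod) (x, i) (y, j)
      = (if ∀ k, k ∉ l → x k = y k then 1 else 0) *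
        ((l.map fun k => Matrix.of fun p q => F k (x k, p) (y k, q)).prod) i j := by
  induction l with
  | nil =>
    intro x i
    simp only [List.map_nil, List.prod_nil, Matrix.one_apply]
    by_cases hxy : x = y
    · subst hxy
      simp [Prod.ext_iff]
    · rw [if_neg (by simp [Prod.ext_iff, hxy]), if_neg, zero_mul]
      intro h
      exact hxy (funext fun k => h k (by simp))
  | cons k0 l ih =>
    intro x i
    obtain ⟨hk0, hl'⟩ := List.nodup_cons.mp hl
    have IH := ih hl'
    simp only [List.map_cons, List.prod_cons, Matrix.mul_apply, Fintype.sum_prod_type]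
    have step1 : ∀ (z : ι → A) (m : N),
        lift k0 (F k0) (x, i) (z, m) * ((l.map fun k => lift k (F k)).prod) (z, m) (y, j)
          = if ∀ k, k ≠ k0 → x k = z k then
              F k0 (x k0, i) (z k0, m) *
                ((l.map fun k => lift k (F k)).prod) (z, m) (y, j) else 0 := by
      intro z m
      simp [lift, ite_mul]
    rw [Finset.sum_congr rfl fun z _ => Finset.sum_congr rfl fun m _ => step1 z m]
    have step1b : ∀ z : ι → A,
        (∑ m : N, if ∀ k, k ≠ k0 → x k = z k then
            F k0 (x k0, i) (z k0, m) *
              ((l.map fun k => lift k (F k)).prod) (z, m) (y, j) else 0)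
          = if ∀ k, k ≠ k0 → x k = z k then
              ∑ m : N, F k0 (x k0, i) (z k0, m) *
                ((l.map fun k => lift k (F k)).prod) (z, m) (y, j) else 0 := by
      intro z
      split_ifs <;> simp
    rw [Finset.sum_congr rfl fun z _ => step1b z]
    rw [sum_update x k0 (fun z => ∑ m : N,
      F k0 (x k0, i) (z k0, m) * ((l.map fun k => lift k (F k)).prod) (z, m) (y, j))]
    have step2 : ∀ (v : A) (m : N),
        ((l.map fun k => lift k (F k)).prod) (Function.update x k0 v, m) (y, j)
          = (if v = y k0 then 1 else 0) * ((if ∀ k, k ∉ k0 :: l → x k = y k then 1 else 0) *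
            ((l.map fun k => Matrix.of fun p q => F k (x k, p) (y k, q)).prod) m j) := by
      intro v m
      rw [IH (Function.update x k0 v) m]
      have hlist : (l.map fun k => Matrix.of fun p q =>
            F k (Function.update x k0 v k, p) (y k, q))
          = l.map fun k => Matrix.of fun p q => F k (x k, p) (y k, q) := by
        apply List.map_congr_left
        intro k hk
        have : k ≠ k0 := fun h => hk0 (h ▸ hk)
        rw [Function.update_of_ne this]
      rw [hlist, ← mul_assoc]
      congr 1
      have hiff : (∀ k, k ∉ l → Function.update x k0 v k = y k)
          ↔ (v = y k0 ∧ ∀ k, k ∉ k0 :: l → x k = y k) := by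
        constructor
        · intro h
          refine ⟨by simpa using h k0 hk0, fun k hk => ?_⟩
          have hk1 : k ≠ k0 := fun h' => hk (h' ▸ List.mem_cons_self)
          have hk2 : k ∉ l := fun h' => hk (List.mem_cons_of_mem _ h')
          simpa [Function.update_of_ne hk1] using h k hk2
        · rintro ⟨h1, h2⟩ k hk
          by_cases hk1 : k = k0
          · subst hk1; simpa using h1
          · rw [Function.update_of_ne hk1]
            exact h2 k (by simp [hk1, hk])
      rw [if_congr hiff rfl rfl]
      by_cases h1 : v = y k0 <;> by_cases h2 : ∀ k, k ∉ k0 :: l → x k = y k <;>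
        simp [h1, h2]
    have step2' : ∀ v : A, (∑ m : N, F k0 (x k0, i) (Function.update x k0 v k0, m) *
        ((l.map fun k => lift k (F k)).prod) (Function.update x k0 v, m) (y, j))
        = if v = y k0 then ((if ∀ k, k ∉ k0 :: l → x k = y k then 1 else 0) *
            ∑ m : N, F k0 (x k0, i) (y k0, m) *
              ((l.map fun k => Matrix.of fun p q => F k (x k, p) (y k, q)).prod) m j) else 0 := by
      intro v
      rw [Finset.sum_congr rfl fun m _ => by rw [step2 v m]]
      by_cases hv : v = y k0
      · rw [if_pos hv]
        subst hv
        simp only [Function.update_self, Finset.mul_sum]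
        refine Finset.sum_congr rfl fun m _ => ?_
        ring
      · simp only [if_neg hv, zero_mul, mul_zero, Finset.sum_const_zero]
    rw [Finset.sum_congr rfl fun v _ => step2' v]
    rw [Finset.sum_ite_eq' Finset.univ (y k0)]
    simp only [Finset.mem_univ, if_true, Matrix.of_apply]

lemma lift_mul (j : ι) (F F' : Matrix (A × N) (A × N) ℂ) :
    lift j F * lift j F' = lift j (F * F') := by
  ext ⟨x, i⟩ ⟨y, jj⟩
  simp only [Matrix.mul_apply, Fintype.sum_prod_type, lift, Matrix.of_apply, ite_mul, zero_mul]
  have hsum1 : ∀ z : ι → A,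
      (∑ m : N, if ∀ k, k ≠ j → x k = z k then
          F (x j, i) (z j, m) *
            (if ∀ k, k ≠ j → z k = y k then F' (z j, m) (y j, jj) else 0) else 0)
        = if ∀ k, k ≠ j → x k = z k then
            ∑ m : N, F (x j, i) (z j, m) *
              (if ∀ k, k ≠ j → z k = y k then F' (z j, m) (y j, jj) else 0) else 0 := by
    intro z
    split_ifs <;> simp
  rw [Finset.sum_congr rfl fun z _ => hsum1 z]
  rw [sum_update x j (fun z => ∑ m : N, F (x j, i) (z j, m) *
      (if ∀ k, k ≠ j → z k = y k then F' (z j, m) (y j, jj) else 0))]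
  have hC : ∀ v : A, (∀ k, k ≠ j → Function.update x j v k = y k)
      ↔ (∀ k, k ≠ j → x k = y k) := by
    intro v
    constructor
    · intro h k hk
      rw [← Function.update_of_ne hk v x]
      exact h k hk
    · intro h k hk
      rw [Function.update_of_ne hk]
      exact h k hk
  simp only [Function.update_self, hC]
  by_cases hc : ∀ k, k ≠ j → x k = y k
  · simp only [if_pos hc]
  · simp only [if_neg hc, mul_zero, Finset.sum_const_zero]

lemma gt_eq_lift (k0 : ι) (Gm : Matrix N N ℂ) :
    (Matrix.of fun p q : (ι → A) × N => if p.1 = q.1 then Gm p.2 q.2 else 0)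
      = lift k0 (Matrix.of fun p q : A × N => if p.1 = q.1 then Gm p.2 q.2 else 0) := by
  ext ⟨x, i⟩ ⟨y, jj⟩
  simp only [lift, Matrix.of_apply]
  by_cases h : x = y
  · subst h
    simp
  · rw [if_neg h]
    by_cases h2 : ∀ k, k ≠ k0 → x k = y k
    · rw [if_pos h2, if_neg]
      intro h3
      exact h (funext fun k => by
        by_cases hk : k = k0
        · subst hk; exact h3
        · exact h2 k hk)
    · rw [if_neg h2]

end BEaux

namespace BEaux

variable {N : Type*} [Fintype N] [DecidableEq N]

lemma norm_prod_le_one (l : List (Matrix N N ℂ)) (h : ∀ M ∈ l, ‖M‖ ≤ 1) :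
    ‖l.prod‖ ≤ 1 := by
  induction l with
  | nil => simpa using norm_one_le (k := N)
  | cons M l ih =>
    rw [List.prod_cons]
    have h1 : ‖M * l.prod‖ ≤ ‖M‖ * ‖l.prod‖ := Matrix.l2_opNorm_mul _ _
    have h2 : ‖M‖ ≤ 1 := h M (List.mem_cons_self)
    have h3 : ‖l.prod‖ ≤ 1 := ih fun M' hM' => h M' (List.mem_cons_of_mem _ hM')
    nlinarith [norm_nonneg M, norm_nonneg l.prod]

lemma telescope {κ : Type*} (ε : ℝ) (hε : 0 ≤ ε) (l : List κ) (f g : κ → Matrix N N ℂ)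
    (hf : ∀ k, ‖f k‖ ≤ 1) (hg : ∀ k, ‖g k‖ ≤ 1) (hd : ∀ k, ‖f k - g k‖ ≤ ε) :
    ‖(l.map f).prod - (l.map g).prod‖ ≤ l.length * ε := by
  induction l with
  | nil => simp
  | cons k l ih =>
    simp only [List.map_cons, List.prod_cons, List.length_cons]
    have h1 : f k * (l.map f).prod - g k * (l.map g).prod
        = f k * ((l.map f).prod - (l.map g).prod) + (f k - g k) * (l.map g).prod := by
      rw [mul_sub, sub_mul]
      abel
    rw [h1]
    have h2 : ‖f k * ((l.map f).prod - (l.map g).prod)‖ ≤ 1 * (l.length * ε) := by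
      have := Matrix.l2_opNorm_mul (f k) ((l.map f).prod - (l.map g).prod)
      have hfk := hf k
      nlinarith [norm_nonneg (f k), norm_nonneg ((l.map f).prod - (l.map g).prod),
        norm_nonneg ((l.map f).prod), ih]
    have h3 : ‖(f k - g k) * (l.map g).prod‖ ≤ ε * 1 := by
      have := Matrix.l2_opNorm_mul (f k - g k) ((l.map g).prod)
      have hprod : ‖(l.map g).prod‖ ≤ 1 := by
        apply norm_prod_le_one
        intro M hM
        obtain ⟨k', _, rfl⟩ := List.mem_map.mp hM
        exact hg k'
      have hdk := hd k
      nlinarith [norm_nonneg (f k - g k), norm_nonneg ((l.map g).prod)]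
    calc ‖f k * ((l.map f).prod - (l.map g).prod) + (f k - g k) * (l.map g).prod‖
        ≤ ‖f k * ((l.map f).prod - (l.map g).prod)‖ + ‖(f k - g k) * (l.map g).prod‖ :=
          norm_add_le _ _
      _ ≤ 1 * (l.length * ε) + ε * 1 := add_le_add h2 h3
      _ = ((l.length : ℝ) + 1) * ε := by ring
      _ = ((l.length + 1 : ℕ) : ℝ) * ε := by push_cast; ring

end BEaux

/-- **Block-encoding of quantum query algorithms.**
Here `G j` for `j : Fin (Q+1)` are the oracle-independent gates `G₀, …, G_Q`, and for
`j : Fin Q` the matrices `U j` and `V j` play the roles of `U_{j+1}` and `V_{j+1}`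
(`V j` acting on the `j`-th ancilla factor of `(ℂ^{2^a})^{⊗Q}` together with the system).
`Vt j` is `V j` applied to the `j`-th ancilla register and the system, `Gt j = I ⊗ G j`, and
`W = G̃_Q Ṽ_Q ⋯ G̃_1 Ṽ_1 G̃_0`.  Then `W` is a `(1, Qa, Qε)`-block-encoding of
`G_Q U_Q ⋯ G_1 U_1 G_0`. -/
theorem block_encoding_of_quantum_query_algorithms
    (Q n a : ℕ) (ε : ℝ) (hε : 0 ≤ ε)
    (G : Fin (Q + 1) → Matrix (Fin (2 ^ n)) (Fin (2 ^ n)) ℂ)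
    (U : Fin Q → Matrix (Fin (2 ^ n)) (Fin (2 ^ n)) ℂ)
    (V : Fin Q → Matrix (Fin (2 ^ a) × Fin (2 ^ n)) (Fin (2 ^ a) × Fin (2 ^ n)) ℂ)
    (hG : ∀ j, G j ∈ Matrix.unitaryGroup (Fin (2 ^ n)) ℂ)
    (hUu : ∀ j, U j ∈ Matrix.unitaryGroup (Fin (2 ^ n)) ℂ)
    (hVu : ∀ j, V j ∈ Matrix.unitaryGroup (Fin (2 ^ a) × Fin (2 ^ n)) ℂ)
    (hBE : ∀ j, l2OpNorm (Matrix.of (fun p q : Fin (2 ^ n) => V j (0, p) (0, q)) - U j) ≤ ε)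
    (Vt : Fin Q → Matrix ((Fin Q → Fin (2 ^ a)) × Fin (2 ^ n))
                         ((Fin Q → Fin (2 ^ a)) × Fin (2 ^ n)) ℂ)
    (hVt : ∀ j, Vt j = Matrix.of (fun p q =>
      if ∀ k, k ≠ j → p.1 k = q.1 k then V j (p.1 j, p.2) (q.1 j, q.2) else 0))
    (Gt : Fin (Q + 1) → Matrix ((Fin Q → Fin (2 ^ a)) × Fin (2 ^ n))
                               ((Fin Q → Fin (2 ^ a)) × Fin (2 ^ n)) ℂ)
    (hGt : ∀ j, Gt j = Matrix.of (fun p q => if p.1 = q.1 then G j p.2 q.2 else 0))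
    (W : Matrix ((Fin Q → Fin (2 ^ a)) × Fin (2 ^ n)) ((Fin Q → Fin (2 ^ a)) × Fin (2 ^ n)) ℂ)
    (hW : W = (((List.finRange Q).reverse.map (fun j => Gt j.succ * Vt j)).prod) * Gt 0) :
    l2OpNorm (Matrix.of (fun i j : Fin (2 ^ n) => W ((fun _ => 0), i) ((fun _ => 0), j)) -
        ((((List.finRange Q).reverse.map (fun j => G j.succ * U j)).prod) * G 0)) ≤ Q * ε := by
  haveI : Nontrivial (Matrix (Fin (2 ^ n)) (Fin (2 ^ n)) ℂ) :=
    inferInstanceAs (Nontrivial (Fin (2 ^ n) → Fin (2 ^ n) → ℂ))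
  haveI : Nontrivial (Matrix (Fin (2 ^ a) × Fin (2 ^ n)) (Fin (2 ^ a) × Fin (2 ^ n)) ℂ) :=
    inferInstanceAs (Nontrivial ((Fin (2 ^ a) × Fin (2 ^ n)) → (Fin (2 ^ a) × Fin (2 ^ n)) → ℂ))
  have nodup : ((List.finRange Q).reverse).Nodup :=
    (List.nodup_reverse).mpr (List.nodup_finRange Q)
  -- Step 1: each factor of `W` (except `Gt 0`) is a lifted two-register matrix.
  have hM : ∀ j : Fin Q, Gt j.succ * Vt j
      = BEaux.lift j ((Matrix.of fun p q : Fin (2 ^ a) × Fin (2 ^ n) =>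
          if p.1 = q.1 then G j.succ p.2 q.2 else 0) * V j) := by
    intro j
    rw [hGt j.succ, hVt j, ← BEaux.lift_mul]
    congr 1
    · exact BEaux.gt_eq_lift j (G j.succ)
    · ext ⟨x, i⟩ ⟨y, jj⟩
      simp only [BEaux.lift, Matrix.of_apply]
  have hprodW : W = ((List.finRange Q).reverse.map
      (fun j => BEaux.lift j ((Matrix.of fun p q : Fin (2 ^ a) × Fin (2 ^ n) =>
          if p.1 = q.1 then G j.succ p.2 q.2 else 0) * V j))).prod * Gt 0 := by
    rw [hW]
    congr 1
    exact congrArg List.prod (List.map_congr_left fun j _ => hM j)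
  -- Step 2: the compressed block of the lifted product is the product of the blocks.
  have hblk : ∀ (i j : Fin (2 ^ n)),
      (((List.finRange Q).reverse.map
        (fun j => BEaux.lift j ((Matrix.of fun p q : Fin (2 ^ a) × Fin (2 ^ n) =>
          if p.1 = q.1 then G j.succ p.2 q.2 else 0) * V j))).prod)
        ((fun _ => 0), i) ((fun _ => 0), j)
      = (((List.finRange Q).reverse.map
          (fun k => G k.succ * Matrix.of (fun p q : Fin (2 ^ n) => V k (0, p) (0, q)))).prod)
          i j := by
    intro i j
    rw [BEaux.prod_lift_apply _ nodup _ _ _ _ _, if_pos (fun k _ => rfl), one_mul]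
    have hlist : ∀ k ∈ (List.finRange Q).reverse,
        (Matrix.of fun p q : Fin (2 ^ n) =>
          ((Matrix.of fun p' q' : Fin (2 ^ a) × Fin (2 ^ n) =>
            if p'.1 = q'.1 then G k.succ p'.2 q'.2 else 0) * V k) (0, p) (0, q))
        = G k.succ * Matrix.of (fun p q : Fin (2 ^ n) => V k (0, p) (0, q)) := by
      intro k _
      ext p q
      simp only [Matrix.of_apply, Matrix.mul_apply, Fintype.sum_prod_type, ite_mul, zero_mul]
      rw [Finset.sum_comm]
      simp [Finset.sum_ite_eq]
    rw [List.map_congr_left hlist]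
  -- Step 3: multiplying by `Gt 0` on the right acts as `G 0` on the block.
  have hG0 : ∀ (i j : Fin (2 ^ n))
      (X : Matrix ((Fin Q → Fin (2 ^ a)) × Fin (2 ^ n))
        ((Fin Q → Fin (2 ^ a)) × Fin (2 ^ n)) ℂ),
      (X * Gt 0) ((fun _ => 0), i) ((fun _ => 0), j)
        = ∑ m, X ((fun _ => 0), i) ((fun _ => 0), m) * G 0 m j := by
    intro i j X
    simp only [Matrix.mul_apply, Fintype.sum_prod_type, hGt 0, Matrix.of_apply, mul_ite, mul_zero]
    rw [Finset.sum_comm]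
    simp [Finset.sum_ite_eq']
  -- Step 4: the block of `W` is the ideal product with `U` replaced by the blocks of `V`.
  have hblockW : Matrix.of (fun i j : Fin (2 ^ n) => W ((fun _ => 0), i) ((fun _ => 0), j))
      = (((List.finRange Q).reverse.map
          (fun k => G k.succ * Matrix.of (fun p q : Fin (2 ^ n) => V k (0, p) (0, q)))).prod)
          * G 0 := by
    ext i j
    rw [Matrix.of_apply, hprodW, hG0, Matrix.mul_apply]
    exact Finset.sum_congr rfl fun m _ => by rw [hblk i m]
  -- Step 5: norm estimates.
  rw [BEaux.l2OpNorm_eq_norm, hblockW, ← sub_mul]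
  have hGnorm : ∀ c, ‖G c‖ = 1 := fun c => CStarRing.norm_of_mem_unitary (hG c)
  have hUnorm : ∀ k, ‖U k‖ = 1 := fun k => CStarRing.norm_of_mem_unitary (hUu k)
  have hVnorm : ∀ k, ‖V k‖ = 1 := fun k => CStarRing.norm_of_mem_unitary (hVu k)
  have hblkV : ∀ k : Fin Q, ‖Matrix.of (fun p q : Fin (2 ^ n) => V k (0, p) (0, q))‖ ≤ 1 := by
    intro k
    have heq : Matrix.of (fun p q : Fin (2 ^ n) => V k (0, p) (0, q))
        = (V k).submatrix (Prod.mk 0) (Prod.mk 0) := rfl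
    rw [heq]
    have hinj : Function.Injective (Prod.mk (0 : Fin (2 ^ a)) : Fin (2 ^ n) → _) :=
      fun p p' h => by simpa using congrArg Prod.snd h
    calc ‖(V k).submatrix (Prod.mk 0) (Prod.mk 0)‖ ≤ ‖V k‖ :=
          BEaux.norm_submatrix_le _ _ _ hinj hinj
      _ = 1 := hVnorm k
  have hf : ∀ k : Fin Q,
      ‖G k.succ * Matrix.of (fun p q : Fin (2 ^ n) => V k (0, p) (0, q))‖ ≤ 1 := by
    intro k
    have := Matrix.l2_opNorm_mul (G k.succ) (Matrix.of (fun p q : Fin (2 ^ n) => V k (0, p) (0, q)))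
    have := hblkV k
    nlinarith [norm_nonneg (Matrix.of (fun p q : Fin (2 ^ n) => V k (0, p) (0, q))),
      hGnorm k.succ]
  have hg : ∀ k : Fin Q, ‖G k.succ * U k‖ ≤ 1 := by
    intro k
    have := Matrix.l2_opNorm_mul (G k.succ) (U k)
    nlinarith [norm_nonneg (U k), hGnorm k.succ, hUnorm k]
  have hd : ∀ k : Fin Q,
      ‖G k.succ * Matrix.of (fun p q : Fin (2 ^ n) => V k (0, p) (0, q)) - G k.succ * U k‖
        ≤ ε := by
    intro k
    rw [← mul_sub]
    have h1 := Matrix.l2_opNorm_mul (G k.succ)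
      (Matrix.of (fun p q : Fin (2 ^ n) => V k (0, p) (0, q)) - U k)
    have h2 : ‖Matrix.of (fun p q : Fin (2 ^ n) => V k (0, p) (0, q)) - U k‖ ≤ ε := by
      rw [← BEaux.l2OpNorm_eq_norm]
      exact hBE k
    nlinarith [norm_nonneg (Matrix.of (fun p q : Fin (2 ^ n) => V k (0, p) (0, q)) - U k),
      hGnorm k.succ]
  have htel := BEaux.telescope ε hε ((List.finRange Q).reverse)
    (fun k => G k.succ * Matrix.of (fun p q : Fin (2 ^ n) => V k (0, p) (0, q)))
    (fun k => G k.succ * U k) hf hg hd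
  have hlen : (((List.finRange Q).reverse).length : ℝ) = Q := by simp
  rw [hlen] at htel
  have hmul := Matrix.l2_opNorm_mul
    ((((List.finRange Q).reverse.map
        (fun k => G k.succ * Matrix.of (fun p q : Fin (2 ^ n) => V k (0, p) (0, q)))).prod)
      - (((List.finRange Q).reverse.map (fun j => G j.succ * U j)).prod))
    (G 0)
  calc ‖_ * G 0‖ ≤ _ * ‖G 0‖ := hmul
    _ ≤ Q * ε := by
        rw [hGnorm 0, mul_one]
        exact htel
end

section
/- Sample lower bound for quantum state discrimination: Let d ≥ 1 and S ≥ 1 be natural numbers, let ρ and σ be density matrices on ℂ^d, and set γ = 1 − F(ρ, σ); assume γ > 0. Suppose Λ₀ and Λ₁ are positive semidefinite matrices on (ℂ^d)^{⊗S} with Λ₀ + Λ₁ = I such that (1/2)·tr(Λ₀ ρ^{⊗S}) + (1/2)·tr(Λ₁ σ^{⊗S}) ≥ 2/3 (these traces are real nonnegative numbers since all matrices involved are positive semidefinite). Then S ≥ 1/(72γ). -/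
open scoped ComplexOrder

/-- The positive semidefinite square root of a positive semidefinite matrix
(restored: `Matrix.PosSemidef.sqrt` was removed from Mathlib). -/
noncomputable def Matrix.PosSemidef.sqrt {n 𝕜 : Type*} [Fintype n] [DecidableEq n] [RCLike 𝕜]
    {A : Matrix n n 𝕜} (hA : A.PosSemidef) : Matrix n n 𝕜 :=
  (hA.1.eigenvectorUnitary : Matrix n n 𝕜) *
    Matrix.diagonal ((↑) ∘ (fun x => √x) ∘ hA.1.eigenvalues) *
    (star hA.1.eigenvectorUnitary : Matrix n n 𝕜)

theorem Matrix.PosSemidef.posSemidef_sqrt {n 𝕜 : Type*} [Fintype n] [DecidableEq n] [RCLike 𝕜]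
    {A : Matrix n n 𝕜} (hA : A.PosSemidef) : hA.sqrt.PosSemidef := by
  have hD : (Matrix.diagonal ((↑) ∘ (fun x => √x) ∘ hA.1.eigenvalues : n → 𝕜)).PosSemidef :=
    Matrix.posSemidef_diagonal_iff.mpr fun i => by
      simp [Function.comp, RCLike.ofReal_nonneg, Real.sqrt_nonneg]
  have := hD.mul_mul_conjTranspose_same (hA.1.eigenvectorUnitary : Matrix n n 𝕜)
  simpa [Matrix.PosSemidef.sqrt, Matrix.star_eq_conjTranspose] using this

/-- The fidelity `F(ρ,σ) = tr √(√σ ρ √σ)` of two positive semidefinite matrices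
(junk value `0` if either matrix fails to be positive semidefinite). -/
noncomputable def fidelity {d : Type*} [Fintype d] [DecidableEq d]
    (ρ σ : Matrix d d ℂ) : ℝ :=
  letI : Decidable (ρ.PosSemidef ∧ σ.PosSemidef) := Classical.propDecidable _
  if h : ρ.PosSemidef ∧ σ.PosSemidef then
    (Matrix.PosSemidef.sqrt
      (show (h.2.sqrt * ρ * h.2.sqrt).PosSemidef by
        have h' := h.1.mul_mul_conjTranspose_same h.2.sqrt
        rwa [h.2.posSemidef_sqrt.isHermitian.eq] at h')).trace.re
  else 0

/-- The `S`-fold Kronecker (tensor) power `M^{⊗S}` of a matrix `M` on `ℂ^d`,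
as a matrix on `(ℂ^d)^{⊗S}`. -/
noncomputable def tensorPow {d : ℕ} (S : ℕ) (M : Matrix (Fin d) (Fin d) ℂ) :
    Matrix (Fin S → Fin d) (Fin S → Fin d) ℂ :=
  Matrix.of fun i j => ∏ k, M (i k) (j k)

namespace Matrix.PosSemidef

open scoped MatrixOrder in
theorem sqrt_eq_cfcSqrt {n 𝕜 : Type*} [Fintype n] [DecidableEq n] [RCLike 𝕜]
    {A : Matrix n n 𝕜} (hA : A.PosSemidef) : hA.sqrt = CFC.sqrt A := by
  rw [CFC.sqrt_eq_cfc, cfc_nnreal_eq_real _ A hA.nonneg, hA.1.cfc_eq]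
  simp only [Matrix.IsHermitian.cfc, Unitary.conjStarAlgAut_apply, Matrix.PosSemidef.sqrt]
  congr 3
  funext i
  simp [hA.eigenvalues_nonneg i]

open scoped MatrixOrder in
theorem sqrt_mul_self {n 𝕜 : Type*} [Fintype n] [DecidableEq n] [RCLike 𝕜]
    {A : Matrix n n 𝕜} (hA : A.PosSemidef) : hA.sqrt * hA.sqrt = A := by
  rw [sqrt_eq_cfcSqrt]
  exact CFC.sqrt_mul_sqrt_self A hA.nonneg

open scoped MatrixOrder in
theorem eq_sqrt_of_sq_eq {n 𝕜 : Type*} [Fintype n] [DecidableEq n] [RCLike 𝕜]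
    {A B : Matrix n n 𝕜} (hA : A.PosSemidef) (hB : B.PosSemidef) (hAB : A ^ 2 = B) :
    A = hB.sqrt := by
  rw [sqrt_eq_cfcSqrt, eq_comm, CFC.sqrt_eq_iff _ _ hB.nonneg hA.nonneg, ← sq, hAB]

end Matrix.PosSemidef

open scoped Matrix MatrixOrder in
theorem Matrix.posSemidef_iff_eq_transpose_mul_self {n : Type*} [Fintype n] [DecidableEq n]
    {A : Matrix n n ℂ} : A.PosSemidef ↔ ∃ B : Matrix n n ℂ, A = Bᴴ * B :=
  ⟨fun h => by
    obtain ⟨B, hB⟩ := CStarAlgebra.nonneg_iff_eq_star_mul_self.mp h.nonneg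
    exact ⟨B, hB⟩,
   fun ⟨B, hB⟩ => hB ▸ Matrix.posSemidef_conjTranspose_mul_self B⟩

open Matrix Finset
set_option linter.unusedSectionVars false
set_option linter.unusedVariables false
set_option maxHeartbeats 1000000

namespace StateDisc

variable {n : Type*} [Fintype n] [DecidableEq n]

lemma trace_re_nonneg {A : Matrix n n ℂ} (hA : A.PosSemidef) : 0 ≤ A.trace.re := by
  have h : ∀ i, 0 ≤ (A i i).re := by
    intro i
    have h0 := hA.dotProduct_mulVec_nonneg (Pi.single i 1)
    have h1 : dotProduct (star (Pi.single i 1)) (A *ᵥ Pi.single i 1) = A i i := by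
      simp [dotProduct, Matrix.mulVec, Pi.single_apply, Finset.sum_ite_eq,
        apply_ite, mul_comm]
    rw [h1] at h0
    exact (RCLike.nonneg_iff.mp h0).1
  rw [Matrix.trace, Complex.re_sum]
  exact Finset.sum_nonneg fun i _ => h i

lemma trace_mul_re_nonneg {A B : Matrix n n ℂ} (hA : A.PosSemidef) (hB : B.PosSemidef) :
    0 ≤ (A * B).trace.re := by
  obtain ⟨X, rfl⟩ := Matrix.posSemidef_iff_eq_transpose_mul_self.mp hA
  have h1 : (Xᴴ * X * B).trace = (X * B * Xᴴ).trace := by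
    rw [mul_assoc, Matrix.trace_mul_comm, mul_assoc]
  rw [h1]
  exact trace_re_nonneg (hB.mul_mul_conjTranspose_same X)

lemma psd_conj {A T : Matrix n n ℂ} (hA : A.PosSemidef) (hT : T.IsHermitian) :
    (T * A * T).PosSemidef := by
  have h := hA.mul_mul_conjTranspose_same T
  rwa [hT.eq] at h

lemma trace_sqrt {A : Matrix n n ℂ} (hA : A.PosSemidef) :
    hA.sqrt.trace = ∑ i, (Real.sqrt (hA.1.eigenvalues i) : ℂ) := by
  rw [Matrix.PosSemidef.sqrt, Matrix.trace_mul_comm,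
    ← mul_assoc, Unitary.coe_star_mul_self, one_mul, Matrix.trace_diagonal]
  rfl

/-- Sum of `⟨v_i, N v_i⟩` over the eigenbasis of a Hermitian matrix equals the trace of `N`. -/
lemma sum_dot_eigenbasis {A : Matrix n n ℂ} (hA : A.IsHermitian) (N : Matrix n n ℂ) :
    ∑ i, dotProduct (star ⇑(hA.eigenvectorBasis i)) (N *ᵥ ⇑(hA.eigenvectorBasis i))
      = N.trace := by
  set U : Matrix n n ℂ := (hA.eigenvectorUnitary : Matrix n n ℂ) with hU
  have h1 : ∀ i, dotProduct (star ⇑(hA.eigenvectorBasis i))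
      (N *ᵥ ⇑(hA.eigenvectorBasis i)) = (star U * N * U) i i := by
    intro i
    simp only [Matrix.mul_apply, dotProduct, Matrix.mulVec, Matrix.star_apply, hU,
      Matrix.IsHermitian.eigenvectorUnitary_apply, Finset.sum_mul, Finset.mul_sum,
      Pi.star_apply]
    rw [Finset.sum_comm]
    refine Finset.sum_congr rfl fun a _ => Finset.sum_congr rfl fun b _ => by ring
  rw [Finset.sum_congr rfl fun i _ => h1 i]
  have hUmem : U ∈ Matrix.unitaryGroup n ℂ := hA.eigenvectorUnitary.2
  have h2 : (star U * N * U).trace = N.trace := by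
    rw [Matrix.trace_mul_comm, ← mul_assoc, (Matrix.mem_unitaryGroup_iff).mp hUmem, one_mul]
  rw [← h2, Matrix.trace]
  rfl

/-- For an "orthonormal or zero" family `u` and a PSD matrix `P`,
`∑ i ⟨u i, P (u i)⟩ ≤ tr P`. -/
lemma sum_dot_le_trace {m : Type*} [Fintype m] [DecidableEq m]
    {u : m → n → ℂ}
    (horth : ∀ i j, i ≠ j → dotProduct (star (u i)) (u j) = 0)
    (hid : ∀ i, dotProduct (star (u i)) (u i) = 0
      ∨ dotProduct (star (u i)) (u i) = 1)
    {P : Matrix n n ℂ} (hP : P.PosSemidef) :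
    ∑ i, (dotProduct (star (u i)) (P *ᵥ u i)).re ≤ P.trace.re := by
  classical
  set Q : Matrix n n ℂ := Matrix.of fun a b => ∑ i, u i a * star (u i b) with hQdef
  have hQherm : Q.IsHermitian := by
    ext a b
    simp only [Matrix.conjTranspose_apply, hQdef, Matrix.of_apply, star_sum, star_mul',
      star_star]
    exact Finset.sum_congr rfl fun i _ => by ring
  have hzero : ∀ i, dotProduct (star (u i)) (u i) = 0 → u i = 0 := fun i h =>
    dotProduct_star_self_eq_zero.mp h
  have hQQ : Q * Q = Q := by
    ext a b
    show ∑ c, (∑ i, u i a * star (u i c)) * (∑ j, u j c * star (u j b))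
        = ∑ i, u i a * star (u i b)
    have e1 : ∀ c : n, (∑ i, u i a * star (u i c)) * (∑ j, u j c * star (u j b))
        = ∑ i, ∑ j, (u i a * star (u i c)) * (u j c * star (u j b)) := fun c =>
      Finset.sum_mul_sum _ _ _ _
    rw [Finset.sum_congr rfl fun c _ => e1 c, Finset.sum_comm]
    refine Finset.sum_congr rfl fun i _ => ?_
    rw [Finset.sum_comm]
    have e2 : ∀ j, (∑ c, (u i a * star (u i c)) * (u j c * star (u j b)))
        = (u i a * star (u j b)) * dotProduct (star (u i)) (u j) := by
      intro j
      simp only [dotProduct, Finset.mul_sum, Pi.star_apply]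
      exact Finset.sum_congr rfl fun c _ => by ring
    rw [Finset.sum_congr rfl fun j _ => e2 j]
    rw [Finset.sum_eq_single i]
    · rcases hid i with h | h
      · rw [h, mul_zero]; simp [hzero i h]
      · rw [h, mul_one]
    · intro j _ hji
      rw [horth i j (Ne.symm hji), mul_zero]
    · intro h; exact absurd (Finset.mem_univ i) h
  have hproj : (1 - Q)ᴴ * (1 - Q) = 1 - Q := by
    rw [Matrix.conjTranspose_sub, Matrix.conjTranspose_one, hQherm.eq,
      sub_mul, one_mul, mul_sub, mul_one, hQQ]
    abel
  have hsub : (1 - Q).PosSemidef := by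
    rw [← hproj]; exact Matrix.posSemidef_conjTranspose_mul_self _
  have htr : (P * Q).trace = ∑ i, dotProduct (star (u i)) (P *ᵥ u i) := by
    show ∑ a, (P * Q) a a = _
    have e3 : ∀ a, (P * Q) a a = ∑ i, ∑ b, star (u i a) * (P a b * u i b) := by
      intro a
      show (∑ b, P a b * (∑ i, u i b * star (u i a))) = _
      simp only [Finset.mul_sum]
      rw [Finset.sum_comm]
      exact Finset.sum_congr rfl fun i _ => Finset.sum_congr rfl fun b _ => by ring
    rw [Finset.sum_congr rfl fun a _ => e3 a, Finset.sum_comm]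
    refine Finset.sum_congr rfl fun i _ => ?_
    simp only [dotProduct, Matrix.mulVec, Pi.star_apply, Finset.mul_sum]
  have hmain : 0 ≤ (P * (1 - Q)).trace.re := trace_mul_re_nonneg hP hsub
  have hexp : (P * (1 - Q)).trace = P.trace - (P * Q).trace := by
    rw [mul_sub, mul_one, Matrix.trace_sub]
  rw [hexp, Complex.sub_re] at hmain
  calc ∑ i, (dotProduct (star (u i)) (P *ᵥ u i)).re
      = (P * Q).trace.re := by rw [htr, Complex.re_sum]
    _ ≤ P.trace.re := by linarith

/-- Cauchy–Schwarz for the semi-inner product defined by a PSD matrix. -/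
lemma dot_psd_cs {P : Matrix n n ℂ} (hP : P.PosSemidef) (x y : n → ℂ) :
    (dotProduct (star x) (P *ᵥ y)).re ≤
      Real.sqrt (dotProduct (star x) (P *ᵥ x)).re *
      Real.sqrt (dotProduct (star y) (P *ᵥ y)).re := by
  obtain ⟨B, rfl⟩ := Matrix.posSemidef_iff_eq_transpose_mul_self.mp hP
  have key : ∀ a b : n → ℂ, dotProduct (star a) ((Bᴴ * B) *ᵥ b)
      = dotProduct (star (B *ᵥ a)) (B *ᵥ b) := by
    intro a b
    rw [← Matrix.mulVec_mulVec, Matrix.dotProduct_mulVec, ← Matrix.star_mulVec]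
  rw [key x y, key x x, key y y]
  set x' : EuclideanSpace ℂ n := WithLp.toLp 2 (B *ᵥ x) with hx'
  set y' : EuclideanSpace ℂ n := WithLp.toLp 2 (B *ᵥ y) with hy'
  have e1 : dotProduct (star (B *ᵥ x)) (B *ᵥ y) = inner (𝕜 := ℂ) x' y' :=
    by rw [EuclideanSpace.inner_toLp_toLp, dotProduct_comm]
  have e2 : dotProduct (star (B *ᵥ x)) (B *ᵥ x) = inner (𝕜 := ℂ) x' x' :=
    by rw [EuclideanSpace.inner_toLp_toLp, dotProduct_comm]
  have e3 : dotProduct (star (B *ᵥ y)) (B *ᵥ y) = inner (𝕜 := ℂ) y' y' :=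
    by rw [EuclideanSpace.inner_toLp_toLp, dotProduct_comm]
  rw [e1, e2, e3]
  have h := re_inner_le_norm (𝕜 := ℂ) x' y'
  rwa [norm_eq_sqrt_re_inner (𝕜 := ℂ) x', norm_eq_sqrt_re_inner (𝕜 := ℂ) y'] at h

lemma sum_sqrt_mul_sqrt_le {m : Type*} [Fintype m] (a b : m → ℝ)
    (ha : ∀ i, 0 ≤ a i) (hb : ∀ i, 0 ≤ b i) :
    ∑ i, Real.sqrt (a i) * Real.sqrt (b i)
      ≤ Real.sqrt (∑ i, a i) * Real.sqrt (∑ i, b i) := by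
  have h := Finset.sum_sq_le_sum_mul_sum_of_sq_eq_mul Finset.univ
    (r := fun i => Real.sqrt (a i) * Real.sqrt (b i)) (f := a) (g := b)
    (fun i _ => ha i) (fun i _ => hb i)
    (fun i _ => by rw [mul_pow, Real.sq_sqrt (ha i), Real.sq_sqrt (hb i)])
  have hr : 0 ≤ ∑ i, Real.sqrt (a i) * Real.sqrt (b i) :=
    Finset.sum_nonneg fun i _ => mul_nonneg (Real.sqrt_nonneg _) (Real.sqrt_nonneg _)
  calc ∑ i, Real.sqrt (a i) * Real.sqrt (b i)
      = Real.sqrt ((∑ i, Real.sqrt (a i) * Real.sqrt (b i)) ^ 2) := (Real.sqrt_sq hr).symm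
    _ ≤ Real.sqrt ((∑ i, a i) * ∑ i, b i) := Real.sqrt_le_sqrt h
    _ = Real.sqrt (∑ i, a i) * Real.sqrt (∑ i, b i) :=
        Real.sqrt_mul (Finset.sum_nonneg fun i _ => ha i) _

lemma star_dot_mulVec_mulVec (M : Matrix n n ℂ) (x y : n → ℂ) :
    dotProduct (star (M *ᵥ x)) (M *ᵥ y)
      = dotProduct (star x) ((Mᴴ * M) *ᵥ y) := by
  rw [Matrix.star_mulVec, Matrix.dotProduct_mulVec, Matrix.vecMul_vecMul,
    ← Matrix.dotProduct_mulVec]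

lemma herm_move {R : Matrix n n ℂ} (hR : R.IsHermitian) (x z : n → ℂ) :
    dotProduct (star x) (R *ᵥ z) = dotProduct (star (R *ᵥ x)) z := by
  rw [Matrix.star_mulVec, hR.eq, Matrix.dotProduct_mulVec]

lemma fidelity_eq {ρ σ : Matrix n n ℂ} (hρ : ρ.PosSemidef) (hσ : σ.PosSemidef)
    (hA : (hσ.sqrt * ρ * hσ.sqrt).PosSemidef) :
    fidelity ρ σ = hA.sqrt.trace.re := by
  rw [fidelity, dif_pos ⟨hρ, hσ⟩]

/-- Key inequality: fidelity is bounded by the classical fidelity of any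
two-outcome measurement. -/
lemma fidelity_le_meas {ρ σ Λ₀ Λ₁ : Matrix n n ℂ} (hρ : ρ.PosSemidef) (hσ : σ.PosSemidef)
    (hΛ₀ : Λ₀.PosSemidef) (hΛ₁ : Λ₁.PosSemidef) (hsum : Λ₀ + Λ₁ = 1) :
    fidelity ρ σ ≤
      Real.sqrt ((Λ₀ * ρ).trace.re * (Λ₀ * σ).trace.re) +
      Real.sqrt ((Λ₁ * ρ).trace.re * (Λ₁ * σ).trace.re) := by
  classical
  set R : Matrix n n ℂ := hρ.sqrt with hRdef
  set T : Matrix n n ℂ := hσ.sqrt with hTdef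
  have hR : R.IsHermitian := hρ.posSemidef_sqrt.1
  have hT : T.IsHermitian := hσ.posSemidef_sqrt.1
  have hRR : R * R = ρ := hρ.sqrt_mul_self
  have hTT : T * T = σ := hσ.sqrt_mul_self
  have hA : (T * ρ * T).PosSemidef := psd_conj hρ hT
  set lam : n → ℝ := hA.1.eigenvalues with hlamdef
  have hlam0 : ∀ i, 0 ≤ lam i := fun i => hA.eigenvalues_nonneg i
  set v : n → n → ℂ := fun i => ⇑(hA.1.eigenvectorBasis i) with hvdef
  set M : Matrix n n ℂ := R * T with hMdef
  -- ⟨M v i, M v j⟩ = λ_i δ_ij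
  have hMM : Mᴴ * M = T * ρ * T := by
    rw [hMdef, Matrix.conjTranspose_mul, hR.eq, hT.eq]
    rw [show T * R * (R * T) = T * (R * R) * T by noncomm_ring, hRR]
  have hvorth : ∀ i j, dotProduct (star (v i)) (v j) = if i = j then 1 else 0 := by
    intro i j
    have h := orthonormal_iff_ite.mp hA.1.eigenvectorBasis.orthonormal i j
    rw [← h, EuclideanSpace.inner_eq_star_dotProduct, dotProduct_comm]
  have key1 : ∀ i j, dotProduct (star (M *ᵥ v i)) (M *ᵥ v j)
      = if i = j then (lam j : ℂ) else 0 := by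
    intro i j
    rw [star_dot_mulVec_mulVec, hMM]
    rw [show (T * ρ * T) *ᵥ v j = lam j • v j from hA.1.mulVec_eigenvectorBasis j]
    rw [dotProduct_smul, hvorth i j]
    by_cases h : i = j <;> simp [h, Complex.real_smul]
  have hMv0 : ∀ i, lam i = 0 → M *ᵥ v i = 0 := by
    intro i h
    apply dotProduct_star_self_eq_zero.mp
    rw [key1 i i, if_pos rfl, h, Complex.ofReal_zero]
  set c : n → ℝ := fun i => Real.sqrt (lam i) with hcdef
  have hc2 : ∀ i, c i * c i = lam i := fun i => Real.mul_self_sqrt (hlam0 i)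
  set u : n → n → ℂ := fun i => ((c i)⁻¹ : ℝ) • (M *ᵥ v i) with hudef
  have hustar : ∀ i, star (u i) = ((c i)⁻¹ : ℝ) • star (M *ᵥ v i) := by
    intro i; rw [hudef]; simp [star_smul]
  have udot : ∀ i j, dotProduct (star (u i)) (u j)
      = ((c i)⁻¹ * (c j)⁻¹ : ℝ) • (if i = j then (lam j : ℂ) else 0) := by
    intro i j
    rw [hustar, hudef]
    rw [smul_dotProduct, dotProduct_smul, key1 i j, smul_smul]
  have horth : ∀ i j, i ≠ j → dotProduct (star (u i)) (u j) = 0 := by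
    intro i j h
    rw [udot, if_neg h, smul_zero]
  have hid : ∀ i, dotProduct (star (u i)) (u i) = 0
      ∨ dotProduct (star (u i)) (u i) = 1 := by
    intro i
    rw [udot, if_pos rfl]
    by_cases h : lam i = 0
    · left; rw [h]; simp
    · right
      have hc : c i ≠ 0 := fun hc => h (by rw [← hc2 i, hc, mul_zero])
      rw [Complex.real_smul]
      rw [show ((c i)⁻¹ * (c i)⁻¹ : ℝ) * (lam i : ℂ)
        = (((c i)⁻¹ * (c i)⁻¹ * lam i : ℝ) : ℂ) by push_cast; ring]
      rw [← hc2 i]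
      field_simp
      exact Complex.ofReal_one
  have udotM : ∀ i, dotProduct (star (u i)) (M *ᵥ v i) = (c i : ℂ) := by
    intro i
    rw [hustar, smul_dotProduct, key1 i i, if_pos rfl]
    by_cases h : lam i = 0
    · rw [h]
      simp [show c i = 0 by rw [hcdef]; simp [h]]
    · have hc : c i ≠ 0 := fun hc => h (by rw [← hc2 i, hc, mul_zero])
      rw [Complex.real_smul]
      rw [show ((c i)⁻¹ : ℝ) * ((lam i : ℝ) : ℂ) = (((c i)⁻¹ * lam i : ℝ) : ℂ) by push_cast; ring]
      congr 1
      rw [← hc2 i]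
      field_simp
  -- fidelity = ∑ c i
  have hfid : fidelity ρ σ = ∑ i, c i := by
    rw [fidelity_eq hρ hσ hA, trace_sqrt hA, Complex.re_sum]
    exact Finset.sum_congr rfl fun i _ => Complex.ofReal_re _
  -- decomposition of M
  have hMsplit : M = R * Λ₀ * T + R * Λ₁ * T := by
    rw [hMdef, show R * Λ₀ * T + R * Λ₁ * T = R * (Λ₀ + Λ₁) * T by noncomm_ring, hsum, mul_one]
  -- generic bound for one POVM element
  have bound : ∀ (W : Matrix n n ℂ), W.PosSemidef →
      ∑ i, (dotProduct (star (u i)) ((R * W * T) *ᵥ v i)).re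
        ≤ Real.sqrt ((W * ρ).trace.re * (W * σ).trace.re) := by
    intro W hW
    have move := fun x z => herm_move hR x z
    have moveT := fun x z => herm_move hT x z
    set a : n → ℝ := fun i =>
      (dotProduct (star (R *ᵥ u i)) (W *ᵥ (R *ᵥ u i))).re with hadef
    set b : n → ℝ := fun i =>
      (dotProduct (star (T *ᵥ v i)) (W *ᵥ (T *ᵥ v i))).re with hbdef
    have ha0 : ∀ i, 0 ≤ a i := fun i => (RCLike.nonneg_iff.mp (hW.dotProduct_mulVec_nonneg _)).1
    have hb0 : ∀ i, 0 ≤ b i := fun i => (RCLike.nonneg_iff.mp (hW.dotProduct_mulVec_nonneg _)).1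
    have step1 : ∀ i, (dotProduct (star (u i)) ((R * W * T) *ᵥ v i)).re
        ≤ Real.sqrt (a i) * Real.sqrt (b i) := by
      intro i
      have e : dotProduct (star (u i)) ((R * W * T) *ᵥ v i)
          = dotProduct (star (R *ᵥ u i)) (W *ᵥ (T *ᵥ v i)) := by
        rw [← Matrix.mulVec_mulVec, ← Matrix.mulVec_mulVec, move]
      rw [e]
      exact dot_psd_cs hW _ _
    have step2 : ∑ i, Real.sqrt (a i) * Real.sqrt (b i)
        ≤ Real.sqrt (∑ i, a i) * Real.sqrt (∑ i, b i) :=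
      sum_sqrt_mul_sqrt_le a b ha0 hb0
    have hsuma : ∑ i, a i ≤ (W * ρ).trace.re := by
      have e : ∀ i, a i = (dotProduct (star (u i)) ((R * W * R) *ᵥ u i)).re := by
        intro i
        rw [hadef]
        simp only
        rw [← move, Matrix.mulVec_mulVec, Matrix.mulVec_mulVec]
      rw [Finset.sum_congr rfl fun i _ => e i]
      have h := sum_dot_le_trace horth hid (psd_conj hW hR)
      refine h.trans (le_of_eq ?_)
      have : (R * W * R).trace = (W * ρ).trace := by
        rw [Matrix.trace_mul_comm, ← mul_assoc, hRR, Matrix.trace_mul_comm]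
      rw [this]
    have hsumb : ∑ i, b i = (W * σ).trace.re := by
      have e : ∀ i, b i = (dotProduct (star (v i)) ((T * W * T) *ᵥ v i)).re := by
        intro i
        rw [hbdef]
        simp only
        rw [← moveT, Matrix.mulVec_mulVec, Matrix.mulVec_mulVec]
      rw [Finset.sum_congr rfl fun i _ => e i, ← Complex.re_sum]
      have h : ∑ i, dotProduct (star (v i)) ((T * W * T) *ᵥ v i)
          = (T * W * T).trace := sum_dot_eigenbasis hA.1 (T * W * T)
      rw [h]
      have : (T * W * T).trace = (W * σ).trace := by
        rw [Matrix.trace_mul_comm, ← mul_assoc, hTT, Matrix.trace_mul_comm]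
      rw [this]
    calc ∑ i, (dotProduct (star (u i)) ((R * W * T) *ᵥ v i)).re
        ≤ ∑ i, Real.sqrt (a i) * Real.sqrt (b i) := Finset.sum_le_sum fun i _ => step1 i
      _ ≤ Real.sqrt (∑ i, a i) * Real.sqrt (∑ i, b i) := step2
      _ ≤ Real.sqrt ((W * ρ).trace.re) * Real.sqrt ((W * σ).trace.re) := by
          apply mul_le_mul (Real.sqrt_le_sqrt hsuma) (le_of_eq (by rw [hsumb]))
            (Real.sqrt_nonneg _) (Real.sqrt_nonneg _)
      _ = Real.sqrt ((W * ρ).trace.re * (W * σ).trace.re) :=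
          (Real.sqrt_mul (trace_mul_re_nonneg hW hρ) _).symm
  -- put it together
  have split : ∀ i, c i = (dotProduct (star (u i)) ((R * Λ₀ * T) *ᵥ v i)).re
      + (dotProduct (star (u i)) ((R * Λ₁ * T) *ᵥ v i)).re := by
    intro i
    have e : (c i : ℂ) = dotProduct (star (u i)) ((R * Λ₀ * T) *ᵥ v i)
        + dotProduct (star (u i)) ((R * Λ₁ * T) *ᵥ v i) := by
      rw [← dotProduct_add, ← Matrix.add_mulVec, ← hMsplit, udotM]
    calc c i = ((c i : ℂ)).re := (Complex.ofReal_re _).symm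
      _ = _ := by rw [e, Complex.add_re]
  calc fidelity ρ σ = ∑ i, c i := hfid
    _ = ∑ i, (dotProduct (star (u i)) ((R * Λ₀ * T) *ᵥ v i)).re
        + ∑ i, (dotProduct (star (u i)) ((R * Λ₁ * T) *ᵥ v i)).re := by
        rw [← Finset.sum_add_distrib]
        exact Finset.sum_congr rfl fun i _ => split i
    _ ≤ _ := add_le_add (bound Λ₀ hΛ₀) (bound Λ₁ hΛ₁)

variable {d S : ℕ}

lemma tensorPow_mul (A B : Matrix (Fin d) (Fin d) ℂ) :
    tensorPow S (A * B) = tensorPow S A * tensorPow S B := by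
  ext i j
  simp only [tensorPow, Matrix.of_apply, Matrix.mul_apply]
  rw [Finset.prod_univ_sum, Fintype.piFinset_univ]
  exact Finset.sum_congr rfl fun x _ => Finset.prod_mul_distrib

lemma tensorPow_conjTranspose (A : Matrix (Fin d) (Fin d) ℂ) :
    (tensorPow S A)ᴴ = tensorPow S Aᴴ := by
  ext i j
  simp only [tensorPow, Matrix.conjTranspose_apply, Matrix.of_apply, star_prod]

lemma tensorPow_posSemidef {A : Matrix (Fin d) (Fin d) ℂ} (hA : A.PosSemidef) :
    (tensorPow S A).PosSemidef := by
  obtain ⟨B, rfl⟩ := Matrix.posSemidef_iff_eq_transpose_mul_self.mp hA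
  rw [tensorPow_mul, ← tensorPow_conjTranspose]
  exact Matrix.posSemidef_conjTranspose_mul_self _

lemma tensorPow_trace (A : Matrix (Fin d) (Fin d) ℂ) :
    (tensorPow S A).trace = A.trace ^ S := by
  simp only [Matrix.trace, Matrix.diag, tensorPow, Matrix.of_apply]
  have h : ∏ _k : Fin S, ∑ m : Fin d, A m m = ∑ x ∈ Fintype.piFinset (fun _ : Fin S => Finset.univ), ∏ k : Fin S, A (x k) (x k) :=
    Finset.prod_univ_sum _ _
  rw [Fintype.piFinset_univ] at h
  rw [← h, Finset.prod_const, Finset.card_univ, Fintype.card_fin]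

lemma trace_real {A : Matrix n n ℂ} (hA : A.IsHermitian) :
    A.trace = (A.trace.re : ℂ) := by
  have h : star A.trace = A.trace := by
    rw [← Matrix.trace_conjTranspose, hA.eq]
  exact (Complex.conj_eq_iff_re.mp h).symm

lemma fidelity_nonneg {ρ σ : Matrix n n ℂ} (hρ : ρ.PosSemidef) (hσ : σ.PosSemidef) :
    0 ≤ fidelity ρ σ := by
  have hB : (hσ.sqrt * ρ * hσ.sqrt).PosSemidef := psd_conj hρ hσ.posSemidef_sqrt.1
  rw [fidelity_eq hρ hσ hB]
  exact trace_re_nonneg hB.posSemidef_sqrt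

lemma fidelity_tensorPow {ρ σ : Matrix (Fin d) (Fin d) ℂ}
    (hρ : ρ.PosSemidef) (hσ : σ.PosSemidef) :
    fidelity (tensorPow S ρ) (tensorPow S σ) = (fidelity ρ σ) ^ S := by
  have hρ' : (tensorPow S ρ).PosSemidef := tensorPow_posSemidef hρ
  have hσ' : (tensorPow S σ).PosSemidef := tensorPow_posSemidef hσ
  have h1 : tensorPow S hσ.sqrt = hσ'.sqrt :=
    Matrix.PosSemidef.eq_sqrt_of_sq_eq (tensorPow_posSemidef hσ.posSemidef_sqrt) hσ'
      (by rw [pow_two, ← tensorPow_mul, hσ.sqrt_mul_self])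
  have hB : (hσ.sqrt * ρ * hσ.sqrt).PosSemidef := psd_conj hρ hσ.posSemidef_sqrt.1
  have hB' : (hσ'.sqrt * tensorPow S ρ * hσ'.sqrt).PosSemidef :=
    psd_conj hρ' hσ'.posSemidef_sqrt.1
  have h2 : tensorPow S hB.sqrt = hB'.sqrt :=
    Matrix.PosSemidef.eq_sqrt_of_sq_eq (tensorPow_posSemidef hB.posSemidef_sqrt) hB'
      (by rw [pow_two, ← tensorPow_mul, hB.sqrt_mul_self, ← h1, ← tensorPow_mul,
        ← tensorPow_mul])
  rw [fidelity_eq hρ' hσ' hB', ← h2, tensorPow_trace, fidelity_eq hρ hσ hB]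
  rw [trace_real hB.posSemidef_sqrt.1, ← Complex.ofReal_pow, Complex.ofReal_re,
    Complex.ofReal_re]

lemma classical_fid_bound {p q : ℝ} (hp0 : 0 ≤ p) (hp1 : p ≤ 1) (hq0 : 0 ≤ q) (hq1 : q ≤ 1) :
    Real.sqrt (p * q) + Real.sqrt ((1 - p) * (1 - q)) ≤ Real.sqrt (1 - (p - q) ^ 2) := by
  set x := Real.sqrt (p * q) with hxdef
  set y := Real.sqrt ((1 - p) * (1 - q)) with hydef
  have hx : x ^ 2 = p * q := Real.sq_sqrt (mul_nonneg hp0 hq0)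
  have hy : y ^ 2 = (1 - p) * (1 - q) := Real.sq_sqrt (mul_nonneg (by linarith) (by linarith))
  have e1 : x * y = Real.sqrt ((p * q) * ((1 - p) * (1 - q))) :=
    (Real.sqrt_mul (mul_nonneg hp0 hq0) _).symm
  have e2 : (p * q) * ((1 - p) * (1 - q)) = (p * (1 - p)) * (q * (1 - q)) := by ring
  have hxy : x * y = Real.sqrt (p * (1 - p)) * Real.sqrt (q * (1 - q)) := by
    rw [e1, e2, Real.sqrt_mul (mul_nonneg hp0 (by linarith))]
  have h2 : 2 * (x * y) ≤ p * (1 - p) + q * (1 - q) := by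
    rw [hxy]
    have h := two_mul_le_add_sq (Real.sqrt (p * (1 - p))) (Real.sqrt (q * (1 - q)))
    rw [Real.sq_sqrt (mul_nonneg hp0 (by linarith)),
      Real.sq_sqrt (mul_nonneg hq0 (by linarith))] at h
    linarith
  have hsq : (x + y) ^ 2 ≤ 1 - (p - q) ^ 2 := by nlinarith [hx, hy]
  have hxy0 : 0 ≤ x + y := add_nonneg (Real.sqrt_nonneg _) (Real.sqrt_nonneg _)
  calc x + y = Real.sqrt ((x + y) ^ 2) := (Real.sqrt_sq hxy0).symm
    _ ≤ _ := Real.sqrt_le_sqrt hsq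

end StateDisc

open StateDisc

/-- **Sample lower bound for quantum state discrimination.**
If a two-outcome measurement `{Λ₀, Λ₁}` on `S` copies distinguishes the density matrices
`ρ` and `σ` with success probability at least `2/3`, then `S ≥ 1/(72γ)` where
`γ = 1 − F(ρ, σ)` is the infidelity. -/
theorem sample_lower_bound_for_state_discrimination
    (d S : ℕ) (hd : 1 ≤ d) (hS : 1 ≤ S)
    (ρ σ : Matrix (Fin d) (Fin d) ℂ)
    (hρ : ρ.PosSemidef) (hρtr : ρ.trace = 1)
    (hσ : σ.PosSemidef) (hσtr : σ.trace = 1)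
    (γ : ℝ) (hγdef : γ = 1 - fidelity ρ σ) (hγ : 0 < γ)
    (Λ₀ Λ₁ : Matrix (Fin S → Fin d) (Fin S → Fin d) ℂ)
    (hΛ₀ : Λ₀.PosSemidef) (hΛ₁ : Λ₁.PosSemidef) (hΛsum : Λ₀ + Λ₁ = 1)
    (hsucc : (2 : ℝ) / 3 ≤
      (1 / 2) * ((Λ₀ * tensorPow S ρ).trace.re) + (1 / 2) * ((Λ₁ * tensorPow S σ).trace.re)) :
    1 / (72 * γ) ≤ (S : ℝ) := by
  have hρ' : (tensorPow S ρ).PosSemidef := tensorPow_posSemidef hρ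
  have hσ' : (tensorPow S σ).PosSemidef := tensorPow_posSemidef hσ
  set F : ℝ := fidelity ρ σ with hFdef
  have hF0 : 0 ≤ F := fidelity_nonneg hρ hσ
  set p₀ : ℝ := (Λ₀ * tensorPow S ρ).trace.re with hp₀
  set p₁ : ℝ := (Λ₁ * tensorPow S ρ).trace.re with hp₁
  set q₀ : ℝ := (Λ₀ * tensorPow S σ).trace.re with hq₀
  set q₁ : ℝ := (Λ₁ * tensorPow S σ).trace.re with hq₁
  have hp0 : 0 ≤ p₀ := trace_mul_re_nonneg hΛ₀ hρ'
  have hp1 : 0 ≤ p₁ := trace_mul_re_nonneg hΛ₁ hρ'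
  have hq0 : 0 ≤ q₀ := trace_mul_re_nonneg hΛ₀ hσ'
  have hq1 : 0 ≤ q₁ := trace_mul_re_nonneg hΛ₁ hσ'
  have hpsum : p₀ + p₁ = 1 := by
    have h : (Λ₀ * tensorPow S ρ).trace + (Λ₁ * tensorPow S ρ).trace = 1 := by
      rw [← Matrix.trace_add, ← Matrix.add_mul, hΛsum, one_mul, tensorPow_trace, hρtr, one_pow]
    calc p₀ + p₁ = ((Λ₀ * tensorPow S ρ).trace + (Λ₁ * tensorPow S ρ).trace).re := by
          rw [Complex.add_re]
      _ = 1 := by rw [h, Complex.one_re]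
  have hqsum : q₀ + q₁ = 1 := by
    have h : (Λ₀ * tensorPow S σ).trace + (Λ₁ * tensorPow S σ).trace = 1 := by
      rw [← Matrix.trace_add, ← Matrix.add_mul, hΛsum, one_mul, tensorPow_trace, hσtr, one_pow]
    calc q₀ + q₁ = ((Λ₀ * tensorPow S σ).trace + (Λ₁ * tensorPow S σ).trace).re := by
          rw [Complex.add_re]
      _ = 1 := by rw [h, Complex.one_re]
  -- measurement bound
  have hmeas : F ^ S ≤ Real.sqrt (p₀ * q₀) + Real.sqrt (p₁ * q₁) := by
    have h := fidelity_le_meas hρ' hσ' hΛ₀ hΛ₁ hΛsum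
    rwa [fidelity_tensorPow hρ hσ] at h
  have hq₁eq : q₁ = 1 - q₀ := by linarith
  have hp₁eq : p₁ = 1 - p₀ := by linarith
  have hδ : 1 / 3 ≤ p₀ - q₀ := by
    have : q₁ = 1 - q₀ := hq₁eq
    linarith [hsucc]
  have hcb : Real.sqrt (p₀ * q₀) + Real.sqrt (p₁ * q₁) ≤ Real.sqrt (1 - (p₀ - q₀) ^ 2) := by
    rw [hp₁eq, hq₁eq]
    exact classical_fid_bound hp0 (by linarith) hq0 (by linarith)
  have hFS : F ^ S ≤ 17 / 18 := by
    have h1 : Real.sqrt (1 - (p₀ - q₀) ^ 2) ≤ 17 / 18 := by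
      have h2 : 1 - (p₀ - q₀) ^ 2 ≤ (17 / 18) ^ 2 := by nlinarith [hδ]
      calc Real.sqrt (1 - (p₀ - q₀) ^ 2) ≤ Real.sqrt ((17 / 18) ^ 2) := Real.sqrt_le_sqrt h2
        _ = 17 / 18 := Real.sqrt_sq (by norm_num)
    linarith [hmeas, hcb]
  -- Bernoulli
  have hγ1 : γ ≤ 1 := by rw [hγdef]; linarith
  have hbern : 1 - (S : ℝ) * γ ≤ F ^ S := by
    have h := one_add_mul_le_pow (a := -γ) (by linarith) S
    have hFγ : F = 1 + -γ := by rw [hγdef]; ring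
    calc 1 - (S : ℝ) * γ = 1 + (S : ℝ) * (-γ) := by ring
      _ ≤ (1 + -γ) ^ S := h
      _ = F ^ S := by rw [← hFγ]
  have hSγ : 1 / 18 ≤ (S : ℝ) * γ := by linarith
  rw [div_le_iff₀ (by positivity)]
  nlinarith [hSγ]
end

section
/- Correctness of the Gibbs-sampling reduction: Let β ≥ 4 and 0 < ε ≤ 1/5. Define the 2×2 density matrices ρ₊ = diag(1/2 − 2/β, 1/2 + 2/β) and ρ₋ = diag(1/2 + 2/β, 1/2 − 2/β), and let G± = exp(−β·(ρ±/2)) / tr(exp(−β·(ρ±/2))) be the Gibbs state of the Hamiltonian ρ±/2 at inverse temperature β. Then (i) G₊ = diag(e, e^{−1})/(e + e^{−1}) and G₋ = diag(e^{−1}, e)/(e + e^{−1}); (ii) for every 2×2 density matrix M with ‖M − G₊‖₁ ≤ ε, the (0,0) entry of M is a real number ≥ 2/3; and (iii) for every 2×2 density matrix M with ‖M − G₋‖₁ ≤ ε, the (0,0) entry of M is a real number ≤ 1/3. -/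
open scoped ComplexOrder

/-- The trace norm `‖M‖₁ = tr √(M†M)` of a complex matrix. -/
noncomputable def traceNorm {m d : Type*} [Fintype m] [Fintype d] [DecidableEq d]
    (M : Matrix m d ℂ) : ℝ :=
  (((Matrix.posSemidef_conjTranspose_mul_self M).1.eigenvectorUnitary : Matrix d d ℂ) *
    Matrix.diagonal (((↑) : ℝ → ℂ) ∘ Real.sqrt ∘
      (Matrix.posSemidef_conjTranspose_mul_self M).1.eigenvalues) *
    (star (Matrix.posSemidef_conjTranspose_mul_self M).1.eigenvectorUnitary :
      Matrix d d ℂ)).trace.re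

lemma gibbs_diag (β x y : ℝ) :
    NormedSpace.exp ((-(β : ℂ)) • ((2 : ℂ)⁻¹ • Matrix.diagonal ![((x:ℝ):ℂ), ((y:ℝ):ℂ)])) =
      Matrix.diagonal ![((Real.exp (-(β/2)*x) : ℝ) : ℂ), ((Real.exp (-(β/2)*y) : ℝ) : ℂ)] := by
  rw [smul_smul, ← Matrix.diagonal_smul, Matrix.exp_diagonal]
  congr 1
  funext i
  rw [Pi.exp_def, ← Complex.exp_eq_exp_ℂ]
  fin_cases i <;>
  · simp [Pi.smul_apply]
    congr 1

lemma psd_diag (S : Matrix (Fin 2) (Fin 2) ℂ) (hS : S.PosSemidef) (i : Fin 2) :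
    0 ≤ (S i i).re ∧ (S i i).im = 0 := by
  have h := hS.diag_nonneg (i := i)
  rw [Complex.le_def] at h
  simp at h
  exact ⟨h.1, h.2.symm⟩

lemma psd_det (S : Matrix (Fin 2) (Fin 2) ℂ) (hS : S.PosSemidef) :
    0 ≤ S.det.re ∧ S.det.im = 0 := by
  rw [hS.1.det_eq_prod_eigenvalues]
  rw [← RCLike.ofReal_prod]
  exact ⟨by simpa using Finset.prod_nonneg fun v (_ : v ∈ Finset.univ) => hS.eigenvalues_nonneg v,
    by simp⟩

lemma entry_le_traceNorm' (A : Matrix (Fin 2) (Fin 2) ℂ) (i j : Fin 2) :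
    ‖A i j‖ ≤ traceNorm A := by
  set B := Matrix.conjTranspose A * A with hBdef
  have hB : B.PosSemidef := Matrix.posSemidef_conjTranspose_mul_self A
  set U := (hB.1.eigenvectorUnitary : Matrix (Fin 2) (Fin 2) ℂ) with hUdef
  set D := Matrix.diagonal (((↑) : ℝ → ℂ) ∘ Real.sqrt ∘ hB.1.eigenvalues) with hDdef
  set S := U * D * star U with hSdef
  have hD : D.PosSemidef :=
    Matrix.posSemidef_diagonal_iff.2 (fun k => Complex.zero_le_real.2 (Real.sqrt_nonneg _))
  have hS : S.PosSemidef := by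
    simpa only [hSdef, Matrix.star_eq_conjTranspose] using hD.mul_mul_conjTranspose_same U
  have hSS : S * S = B := by
    have hU : star U * U = 1 := Unitary.coe_star_mul_self _
    have hDD : D * D = Matrix.diagonal (RCLike.ofReal ∘ hB.1.eigenvalues) := by
      rw [hDdef, Matrix.diagonal_mul_diagonal]
      congr 1
      funext k
      simp only [Function.comp_apply]
      rw [← Complex.ofReal_mul, Real.mul_self_sqrt (hB.eigenvalues_nonneg k)]
      rfl
    calc S * S = U * (D * (star U * U) * D) * star U := by simp only [hSdef, mul_assoc]
      _ = B := by
        rw [hU, mul_one, hDD]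
        exact hB.1.spectral_theorem.symm
  obtain ⟨ha, ha'⟩ := psd_diag S hS 0
  obtain ⟨hd, hd'⟩ := psd_diag S hS 1
  have hherm : S 1 0 = (starRingEnd ℂ) (S 0 1) := by
    have := congrFun (congrFun hS.1 1) 0
    simpa [Matrix.conjTranspose_apply] using this.symm
  obtain ⟨hdet, _⟩ := psd_det S hS
  rw [Matrix.det_fin_two, hherm] at hdet
  have hdet' : Complex.normSq (S 0 1) ≤ (S 0 0).re * (S 1 1).re := by
    have := hdet
    simp [Complex.mul_re, Complex.mul_conj, ha', hd', Complex.normSq_apply] at this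
    rw [Complex.normSq_apply]
    linarith [this]
  have htrB : B.trace.re = ∑ p : Fin 2, ∑ q : Fin 2, Complex.normSq (A p q) := by
    simp [hBdef, Matrix.trace_fin_two, Matrix.mul_apply, Fin.sum_univ_two,
      Matrix.conjTranspose_apply, Complex.add_re, Complex.normSq_apply, Complex.mul_re,
      Complex.conj_re, Complex.conj_im]
    ring
  have htrSS : (S * S).trace.re = (S 0 0).re ^ 2 + (S 1 1).re ^ 2
      + 2 * Complex.normSq (S 0 1) := by
    simp [Matrix.trace_fin_two, Matrix.mul_apply, Fin.sum_univ_two, hherm,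
      Complex.add_re, Complex.mul_re, Complex.normSq_apply, Complex.conj_re, Complex.conj_im,
      ha', hd']
    ring
  have htrS : S.trace.re = (S 0 0).re + (S 1 1).re := by
    simp [Matrix.trace_fin_two, Complex.add_re]
  have key : Complex.normSq (A i j) ≤ (S.trace.re) ^ 2 := by
    have h1 : Complex.normSq (A i j) ≤ B.trace.re := by
      rw [htrB]
      calc Complex.normSq (A i j) ≤ ∑ q : Fin 2, Complex.normSq (A i q) :=
            Finset.single_le_sum (fun q _ => Complex.normSq_nonneg _) (Finset.mem_univ j)
        _ ≤ ∑ p : Fin 2, ∑ q : Fin 2, Complex.normSq (A p q) :=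
            Finset.single_le_sum
              (fun p _ => Finset.sum_nonneg fun q _ => Complex.normSq_nonneg _)
              (Finset.mem_univ i)
    have h2 : B.trace.re = (S * S).trace.re := by rw [hSS]
    rw [h2, htrSS] at h1
    rw [htrS]
    nlinarith [h1, hdet', ha, hd]
  have habs : ‖A i j‖ ^ 2 = Complex.normSq (A i j) := Complex.sq_norm _
  have htrnonneg : 0 ≤ S.trace.re := by rw [htrS]; linarith
  have : traceNorm A = S.trace.re := rfl
  rw [this]
  nlinarith [key, habs, norm_nonneg (A i j), htrnonneg]

lemma smul_diag_eq (r u v : ℝ) (hr : r ≠ 0) (huv : u + v ≠ 0) :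
    (Matrix.diagonal ![((r*u : ℝ):ℂ), ((r*v : ℝ):ℂ)]).trace⁻¹ •
      Matrix.diagonal ![((r*u:ℝ):ℂ), ((r*v:ℝ):ℂ)]
    = ((u + v : ℝ):ℂ)⁻¹ • Matrix.diagonal ![((u:ℝ):ℂ), ((v:ℝ):ℂ)] := by
  have hr' : (r : ℂ) ≠ 0 := by exact_mod_cast hr
  have huv' : ((u : ℂ) + (v : ℂ)) ≠ 0 := by
    intro h
    exact huv (by exact_mod_cast congrArg Complex.re h)
  have h3 : (r:ℂ) * u + (r:ℂ) * v ≠ 0 := by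
    rw [← mul_add]; exact mul_ne_zero hr' huv'
  ext i j
  fin_cases i <;> fin_cases j <;>
    simp [Matrix.trace_diagonal, Fin.sum_univ_two, Matrix.diagonal_apply] <;>
    field_simp <;>
    ring

/-- **Correctness of the Gibbs-sampling reduction.**
For `β ≥ 4` and `0 < ε ≤ 1/5`, with `ρ₊ = diag(1/2 − 2/β, 1/2 + 2/β)`,
`ρ₋ = diag(1/2 + 2/β, 1/2 − 2/β)` and `G± = exp(−β(ρ±/2))/tr(exp(−β(ρ±/2)))`:
(i) `G₊ = diag(e, e⁻¹)/(e + e⁻¹)` and `G₋ = diag(e⁻¹, e)/(e + e⁻¹)`;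
(ii) any density matrix `ε`-close to `G₊` in trace norm has real `(0,0)` entry `≥ 2/3`;
(iii) any density matrix `ε`-close to `G₋` in trace norm has real `(0,0)` entry `≤ 1/3`. -/
theorem gibbs_sampling_reduction_correctness
    (β ε : ℝ) (hβ : 4 ≤ β) (hε : 0 < ε) (hε5 : ε ≤ 1 / 5)
    (ρp ρm : Matrix (Fin 2) (Fin 2) ℂ)
    (hρp : ρp = Matrix.diagonal ![((1 / 2 - 2 / β : ℝ) : ℂ), ((1 / 2 + 2 / β : ℝ) : ℂ)])
    (hρm : ρm = Matrix.diagonal ![((1 / 2 + 2 / β : ℝ) : ℂ), ((1 / 2 - 2 / β : ℝ) : ℂ)])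
    (Gp Gm : Matrix (Fin 2) (Fin 2) ℂ)
    (hGp : Gp = (NormedSpace.exp ((-(β : ℂ)) • ((2 : ℂ)⁻¹ • ρp))).trace⁻¹ •
      NormedSpace.exp ((-(β : ℂ)) • ((2 : ℂ)⁻¹ • ρp)))
    (hGm : Gm = (NormedSpace.exp ((-(β : ℂ)) • ((2 : ℂ)⁻¹ • ρm))).trace⁻¹ •
      NormedSpace.exp ((-(β : ℂ)) • ((2 : ℂ)⁻¹ • ρm))) :
    (Gp = ((Real.exp 1 + Real.exp (-1) : ℝ) : ℂ)⁻¹ •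
        Matrix.diagonal ![((Real.exp 1 : ℝ) : ℂ), ((Real.exp (-1) : ℝ) : ℂ)] ∧
      Gm = ((Real.exp 1 + Real.exp (-1) : ℝ) : ℂ)⁻¹ •
        Matrix.diagonal ![((Real.exp (-1) : ℝ) : ℂ), ((Real.exp 1 : ℝ) : ℂ)]) ∧
    (∀ M : Matrix (Fin 2) (Fin 2) ℂ, M.PosSemidef → M.trace = 1 →
      traceNorm (M - Gp) ≤ ε → (M 0 0).im = 0 ∧ 2 / 3 ≤ (M 0 0).re) ∧
    (∀ M : Matrix (Fin 2) (Fin 2) ℂ, M.PosSemidef → M.trace = 1 →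
      traceNorm (M - Gm) ≤ ε → (M 0 0).im = 0 ∧ (M 0 0).re ≤ 1 / 3) := by
  have hβ0 : β ≠ 0 := by linarith
  set c := Real.exp 1 with hc
  set c' := Real.exp (-1 : ℝ) with hc'
  have hcpos : 0 < c := Real.exp_pos 1
  have hc'pos : 0 < c' := Real.exp_pos _
  have hcc' : c * c' = 1 := by
    rw [hc, hc', ← Real.exp_add]; norm_num
  have hE : c + c' ≠ 0 := by positivity
  set r := Real.exp (-(β/4)) with hr
  have hrne : r ≠ 0 := (Real.exp_pos _).ne'
  have e1 : Real.exp (-(β/2)*(1/2 - 2/β)) = r * c := by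
    rw [hr, hc, ← Real.exp_add]; congr 1; field_simp; ring
  have e2 : Real.exp (-(β/2)*(1/2 + 2/β)) = r * c' := by
    rw [hr, hc', ← Real.exp_add]; congr 1; field_simp; ring
  have e1' : Real.exp (-(β/2)*(1/2 + 2/β)) = r * c' := e2
  have hGp' : Gp = ((c + c' : ℝ) : ℂ)⁻¹ •
      Matrix.diagonal ![((c : ℝ) : ℂ), ((c' : ℝ) : ℂ)] := by
    rw [hGp, hρp, gibbs_diag, e1, e2, smul_diag_eq r c c' hrne hE]
  have hGm' : Gm = ((c + c' : ℝ) : ℂ)⁻¹ •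
      Matrix.diagonal ![((c' : ℝ) : ℂ), ((c : ℝ) : ℂ)] := by
    have : Gm = ((c' + c : ℝ) : ℂ)⁻¹ •
        Matrix.diagonal ![((c' : ℝ) : ℂ), ((c : ℝ) : ℂ)] := by
      rw [hGm, hρm, gibbs_diag, e1, e2, smul_diag_eq r c' c hrne (by rw [add_comm]; exact hE)]
    rw [this, add_comm c' c]
  -- numeric bounds
  have hclb : 2.7182818283 < c := Real.exp_one_gt_d9
  have hGp00 : (Gp 0 0).re = c / (c + c') ∧ (Gp 0 0).im = 0 := by
    rw [hGp']
    have hns : Complex.normSq ((c:ℂ) + (c':ℂ)) = (c + c') ^ 2 := by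
      rw [← Complex.ofReal_add, Complex.normSq_ofReal]; ring
    constructor <;>
      simp [Matrix.smul_apply, Matrix.diagonal_apply, Complex.mul_re, Complex.mul_im,
        Complex.inv_re, Complex.inv_im, hns] <;>
      field_simp <;>
      ring
  have hGm00 : (Gm 0 0).re = c' / (c + c') ∧ (Gm 0 0).im = 0 := by
    rw [hGm']
    have hns : Complex.normSq ((c:ℂ) + (c':ℂ)) = (c + c') ^ 2 := by
      rw [← Complex.ofReal_add, Complex.normSq_ofReal]; ring
    constructor <;>
      simp [Matrix.smul_apply, Matrix.diagonal_apply, Complex.mul_re, Complex.mul_im,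
        Complex.inv_re, Complex.inv_im, hns] <;>
      field_simp <;>
      ring
  refine ⟨⟨hGp', hGm'⟩, ?_, ?_⟩
  · intro M hM hMtr hclose
    have him : (M 0 0).im = 0 := by
      have := congrFun (congrFun hM.1 0) 0
      rw [Matrix.conjTranspose_apply] at this
      have := congrArg Complex.im this
      simp at this
      linarith
    refine ⟨him, ?_⟩
    have hb := (entry_le_traceNorm' (M - Gp) 0 0).trans (hclose.trans hε5)
    have hre : |(M 0 0).re - c / (c + c')| ≤ 1/5 := by
      have h1 : |((M - Gp) 0 0).re| ≤ ‖(M - Gp) 0 0‖ := Complex.abs_re_le_norm _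
      have h2 : ((M - Gp) 0 0).re = (M 0 0).re - c / (c + c') := by
        simp [Matrix.sub_apply, Complex.sub_re, hGp00.1]
      rw [h2] at h1
      linarith
    rw [abs_le] at hre
    have h13 : 13 * c' ≤ 2 * c := by nlinarith [hcc', hclb, hcpos, hc'pos]
    have hpos : 0 < c + c' := by positivity
    have hkey : 2/3 ≤ c / (c + c') - 1/5 := by
      rw [le_sub_iff_add_le, le_div_iff₀ hpos]
      linarith [h13, hpos]
    linarith [hre.1]
  · intro M hM hMtr hclose
    have him : (M 0 0).im = 0 := by
      have := congrFun (congrFun hM.1 0) 0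
      rw [Matrix.conjTranspose_apply] at this
      have := congrArg Complex.im this
      simp at this
      linarith
    refine ⟨him, ?_⟩
    have hb := (entry_le_traceNorm' (M - Gm) 0 0).trans (hclose.trans hε5)
    have hre : |(M 0 0).re - c' / (c + c')| ≤ 1/5 := by
      have h1 : |((M - Gm) 0 0).re| ≤ ‖(M - Gm) 0 0‖ := Complex.abs_re_le_norm _
      have h2 : ((M - Gm) 0 0).re = (M 0 0).re - c' / (c + c') := by
        simp [Matrix.sub_apply, Complex.sub_re, hGm00.1]
      rw [h2] at h1
      linarith
    rw [abs_le] at hre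
    have h13 : 13 * c' ≤ 2 * c := by nlinarith [hcc', hclb, hcpos, hc'pos]
    have hpos : 0 < c + c' := by positivity
    have hkey : c' / (c + c') + 1/5 ≤ 1/3 := by
      rw [← le_sub_iff_add_le, div_le_iff₀ hpos]
      linarith [h13, hpos]
    linarith [hre.2]
end

section
/- Distinguishing Hamiltonians by time evolution on |+⟩: Let t be a nonzero real number. Define the 2×2 density matrices ρ = (1/2)·I₂ and σ = diag(1/2 + π/t, 1/2 − π/t), and let |+⟩ = (e₀ + e₁)/√2 and |−⟩ = (e₀ − e₁)/√2. Then exp(−i·t·(ρ/2))|+⟩ = e^{−it/4}|+⟩ and exp(−i·t·(σ/2))|+⟩ = −i·e^{−it/4}|−⟩. Consequently, |⟨+| exp(−i·t·(ρ/2)) |+⟩|² = 1 and ⟨+| exp(−i·t·(σ/2)) |+⟩ = 0. -/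
open Matrix Complex

/-- **Distinguishing Hamiltonians by time evolution on `|+⟩`.**
With `ρ = I/2`, `σ = diag(1/2 + π/t, 1/2 − π/t)`, `|+⟩ = (e₀ + e₁)/√2` and
`|−⟩ = (e₀ − e₁)/√2`, we have `exp(−it(ρ/2))|+⟩ = e^{−it/4}|+⟩` and
`exp(−it(σ/2))|+⟩ = −i e^{−it/4}|−⟩`; consequently
`|⟨+|exp(−it(ρ/2))|+⟩|² = 1` and `⟨+|exp(−it(σ/2))|+⟩ = 0`. -/
theorem distinguish_hamiltonians_on_plus
    (t : ℝ) (ht : t ≠ 0)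
    (ρ σ : Matrix (Fin 2) (Fin 2) ℂ)
    (hρ : ρ = (2 : ℂ)⁻¹ • (1 : Matrix (Fin 2) (Fin 2) ℂ))
    (hσ : σ = Matrix.diagonal
      ![((1 / 2 + Real.pi / t : ℝ) : ℂ), ((1 / 2 - Real.pi / t : ℝ) : ℂ)])
    (plus minus : Fin 2 → ℂ)
    (hplus : plus = ((Real.sqrt 2 : ℝ) : ℂ)⁻¹ •
      (Pi.single (0 : Fin 2) (1 : ℂ) + Pi.single (1 : Fin 2) (1 : ℂ)))
    (hminus : minus = ((Real.sqrt 2 : ℝ) : ℂ)⁻¹ •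
      (Pi.single (0 : Fin 2) (1 : ℂ) - Pi.single (1 : Fin 2) (1 : ℂ))) :
    (NormedSpace.exp ((-(Complex.I * (t : ℂ))) • ((2 : ℂ)⁻¹ • ρ))).mulVec plus =
      Complex.exp (-(Complex.I * (t : ℂ)) / 4) • plus ∧
    (NormedSpace.exp ((-(Complex.I * (t : ℂ))) • ((2 : ℂ)⁻¹ • σ))).mulVec plus =
      (-Complex.I * Complex.exp (-(Complex.I * (t : ℂ)) / 4)) • minus ∧
    ‖dotProduct (star plus)
      ((NormedSpace.exp ((-(Complex.I * (t : ℂ))) • ((2 : ℂ)⁻¹ • ρ))).mulVec plus)‖ ^ 2 = 1 ∧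
    dotProduct (star plus)
      ((NormedSpace.exp ((-(Complex.I * (t : ℂ))) • ((2 : ℂ)⁻¹ • σ))).mulVec plus) = 0 := by
  have hs2 : ((Real.sqrt 2 : ℝ) : ℂ) ≠ 0 := by
    exact_mod_cast Real.sqrt_ne_zero'.2 (by norm_num)
  set e : ℂ := Complex.exp (-(Complex.I * (t : ℂ)) / 4) with he
  -- ρ part
  have hρd : ((-(Complex.I * (t : ℂ))) • ((2 : ℂ)⁻¹ • ρ)) =
      Matrix.diagonal ![-(Complex.I * (t : ℂ)) / 4, -(Complex.I * (t : ℂ)) / 4] := by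
    rw [hρ]
    ext i j
    fin_cases i <;> fin_cases j <;>
      simp [Matrix.one_apply, Matrix.diagonal] <;> ring
  have htc : (t : ℂ) ≠ 0 := by exact_mod_cast ht
  have hρexp : NormedSpace.exp ((-(Complex.I * (t : ℂ))) • ((2 : ℂ)⁻¹ • ρ)) =
      Matrix.diagonal ![e, e] := by
    rw [hρd, Matrix.exp_diagonal]
    ext i j
    fin_cases i <;> fin_cases j <;>
      simp [Matrix.diagonal, ← Complex.exp_eq_exp_ℂ, he]
  -- σ part
  have hσd : ((-(Complex.I * (t : ℂ))) • ((2 : ℂ)⁻¹ • σ)) =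
      Matrix.diagonal ![-(Complex.I * (t : ℂ)) / 4 - ((Real.pi : ℂ) / 2) * Complex.I,
        -(Complex.I * (t : ℂ)) / 4 + ((Real.pi : ℂ) / 2) * Complex.I] := by
    rw [hσ]
    ext i j
    fin_cases i <;> fin_cases j <;>
      simp [Matrix.diagonal] <;> push_cast <;> field_simp [htc] <;> ring
  have hexp1 : Complex.exp (-(Complex.I * (t : ℂ)) / 4 - ((Real.pi : ℂ) / 2) * Complex.I)
      = -Complex.I * e := by
    rw [Complex.exp_sub, he, Complex.exp_mul_I]
    push_cast
    rw [Complex.cos_pi_div_two, Complex.sin_pi_div_two]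
    simp [Complex.exp_ne_zero, div_eq_iff Complex.I_ne_zero]
    ring
  have hexp2 : Complex.exp (-(Complex.I * (t : ℂ)) / 4 + ((Real.pi : ℂ) / 2) * Complex.I)
      = Complex.I * e := by
    rw [Complex.exp_add, he, Complex.exp_mul_I]
    push_cast
    rw [Complex.cos_pi_div_two, Complex.sin_pi_div_two]
    ring
  have hσexp : NormedSpace.exp ((-(Complex.I * (t : ℂ))) • ((2 : ℂ)⁻¹ • σ)) =
      Matrix.diagonal ![-Complex.I * e, Complex.I * e] := by
    rw [hσd, Matrix.exp_diagonal]
    ext i j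
    fin_cases i <;> fin_cases j <;>
      simp [Matrix.diagonal, ← Complex.exp_eq_exp_ℂ, hexp1, hexp2]
  have h1 : (NormedSpace.exp ((-(Complex.I * (t : ℂ))) • ((2 : ℂ)⁻¹ • ρ))).mulVec plus
      = e • plus := by
    rw [hρexp, hplus]
    funext i
    fin_cases i <;> simp [Matrix.mulVec_diagonal] <;> ring
  have h2 : (NormedSpace.exp ((-(Complex.I * (t : ℂ))) • ((2 : ℂ)⁻¹ • σ))).mulVec plus
      = (-Complex.I * e) • minus := by
    rw [hσexp, hplus, hminus]
    funext i
    fin_cases i <;> simp [Matrix.mulVec_diagonal] <;> ring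
  have hnorm : plus 0 = ((Real.sqrt 2 : ℝ) : ℂ)⁻¹ ∧ plus 1 = ((Real.sqrt 2 : ℝ) : ℂ)⁻¹ := by
    constructor <;> simp [hplus]
  have hdot : dotProduct (star plus) plus = 1 := by
    simp [dotProduct, Fin.sum_univ_two, hplus, Pi.single_apply]
    have h : ((Real.sqrt 2 : ℝ) : ℂ)⁻¹ * ((Real.sqrt 2 : ℝ) : ℂ)⁻¹ = 2⁻¹ := by
      rw [← mul_inv, ← Complex.ofReal_mul, Real.mul_self_sqrt (by norm_num)]
      norm_num
    rw [h]; norm_num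
  refine ⟨h1, h2, ?_, ?_⟩
  · rw [h1]
    have : dotProduct (star plus) (e • plus) = e := by
      rw [dotProduct_smul, hdot]; simp
    rw [this, he, Complex.norm_exp]
    norm_num
  · rw [h2]
    rw [dotProduct_smul]
    have : dotProduct (star plus) minus = 0 := by
      simp [dotProduct, Fin.sum_univ_two, hplus, hminus, Pi.single_apply]
    rw [this]; simp
end
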